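/- arXiv:1506.05982 — 7 statements merged into one kernel-verified Lean document; each statement's English description precedes it below -/
import Mathlib

section
/- Let X be a nonempty subset of the l∞ plane ℝ²_∞. Let Y be a subset of ℝ²_∞ that is closed, geodesically convex, contains X, and is minimal with these properties (i.e., no proper subset of Y is closed, geodesically convex and contains X). Then Y, with the metric induced from ℝ²_∞, is isometric to the tight span T(X) of X. -/
set_option linter.unusedSectionVars false



/-- A geodesic from `p` to `q` in a metric space: an isometric embedding of the
real interval `[0, dist p q]` sending `0` to `p` and `dist p q` to `q`. -/
def IsGeodesic {X : Type*} [MetricSpace X] (p q : X) (γ : ℝ → X) : Prop :=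
  γ 0 = p ∧ γ (dist p q) = q ∧
    ∀ s ∈ Set.Icc (0 : ℝ) (dist p q), ∀ t ∈ Set.Icc (0 : ℝ) (dist p q),
      dist (γ s) (γ t) = |s - t|

/-- A subset `A` is geodesically convex if any two of its points are joined by a
geodesic of the ambient space whose image lies in `A`. -/
def GeodConvex {X : Type*} [MetricSpace X] (A : Set X) : Prop :=
  ∀ p ∈ A, ∀ q ∈ A, ∃ γ : ℝ → X, IsGeodesic p q γ ∧
    ∀ t ∈ Set.Icc (0 : ℝ) (dist p q), γ t ∈ A

/-- The tight span `T(X)` of a subset `X` of a metric space: the set of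
functions `f : X → ℝ≥0` with `f x + f y ≥ d(x,y)` for all `x y ∈ X` and
`inf_{y ∈ X} (f x + f y − d(x,y)) = 0` for all `x ∈ X`. -/
def TightSpanSet {α : Type*} [MetricSpace α] (X : Set α) : Set (↥X → ℝ) :=
  {f | (∀ x : X, 0 ≤ f x) ∧ (∀ x y : X, dist (x : α) (y : α) ≤ f x + f y) ∧
    ∀ x : X, (⨅ y : X, (f x + f y - dist (x : α) (y : α))) = 0}

namespace TSP
open Set

variable {α : Type*} [MetricSpace α] {X : Set α}

noncomputable def dT (f g : ↥X → ℝ) : ℝ := ⨆ x : X, |f x - g x|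

lemma ts_nonneg {f : ↥X → ℝ} (hf : f ∈ TightSpanSet X) (x : ↥X) : 0 ≤ f x := hf.1 x

lemma ts_tri {f : ↥X → ℝ} (hf : f ∈ TightSpanSet X) (x y : ↥X) :
    dist (x : α) (y : α) ≤ f x + f y := hf.2.1 x y

lemma ts_inf {f : ↥X → ℝ} (hf : f ∈ TightSpanSet X) (x : ↥X) :
    (⨅ y : X, (f x + f y - dist (x : α) (y : α))) = 0 := hf.2.2 x

lemma ts_eps [Nonempty ↥X] {f : ↥X → ℝ} (hf : f ∈ TightSpanSet X) (x : ↥X) {ε : ℝ}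
    (hε : 0 < ε) : ∃ y : ↥X, f x + f y - dist (x : α) (y : α) < ε := by
  have h := ts_inf hf x
  exact exists_lt_of_ciInf_lt (by rw [h]; exact hε)

lemma ts_min [Nonempty ↥X] {f g : ↥X → ℝ} (hf : f ∈ TightSpanSet X)
    (hg : ∀ x y : ↥X, dist (x : α) (y : α) ≤ g x + g y) (hle : ∀ x, g x ≤ f x) :
    ∀ x, f x ≤ g x := by
  intro x
  by_contra hcon
  push_neg at hcon
  obtain ⟨y, hy⟩ := ts_eps hf x (sub_pos.mpr hcon)
  have h1 := hg x y
  have h2 := hle y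
  linarith

lemma ts_lip [Nonempty ↥X] {f : ↥X → ℝ} (hf : f ∈ TightSpanSet X) (x y : ↥X) :
    f x ≤ f y + dist (y : α) (x : α) := by
  have hg : ∀ z w : ↥X, dist (z : α) (w : α) ≤
      (min (f z) (f y + dist (y : α) (z : α))) + (min (f w) (f y + dist (y : α) (w : α))) := by
    intro z w
    have h1 := ts_tri hf z w
    have h2 := ts_tri hf z y
    have h3 := ts_tri hf y w
    have h4 : dist (z : α) (w : α) ≤ dist (z : α) (y : α) + dist (y : α) (w : α) :=
      dist_triangle _ _ _
    have h5 : (0:ℝ) ≤ f y := ts_nonneg hf y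
    have d1 : dist (y : α) (z : α) = dist (z : α) (y : α) := dist_comm _ _
    have d2 : dist (y : α) (w : α) = dist (w : α) (y : α) := dist_comm _ _
    rcases min_cases (f z) (f y + dist (y : α) (z : α)) with ⟨e1, _⟩ | ⟨e1, _⟩ <;>
      rcases min_cases (f w) (f y + dist (y : α) (w : α)) with ⟨e2, _⟩ | ⟨e2, _⟩ <;>
      rw [e1, e2] <;> linarith
  have := ts_min hf hg (fun z => min_le_left _ _) x
  calc f x ≤ min (f x) (f y + dist (y : α) (x : α)) := this
    _ ≤ _ := min_le_right _ _

noncomputable def eX (x : ↥X) : ↥X → ℝ := fun y => dist (x : α) (y : α)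

lemma eX_mem [Nonempty ↥X] (x : ↥X) : eX x ∈ TightSpanSet X := by
  refine ⟨fun y => dist_nonneg, fun z w => dist_triangle_left _ _ _, fun z => ?_⟩
  have hbdd : BddBelow (range fun y : ↥X => eX x z + eX x y - dist (z : α) (y : α)) := by
    refine ⟨0, ?_⟩
    rintro _ ⟨y, rfl⟩
    have := dist_triangle_left (z : α) (y : α) (x : α)
    simp only [eX]
    linarith
  refine le_antisymm ?_ ?_
  · have := ciInf_le hbdd x
    simpa [eX, dist_comm] using this
  · refine le_ciInf fun y => ?_
    have := dist_triangle_left (z : α) (y : α) (x : α)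
    simp only [eX]
    linarith

lemma ts_bdd [Nonempty ↥X] {f g : ↥X → ℝ} (hf : f ∈ TightSpanSet X) (hg : g ∈ TightSpanSet X) :
    BddAbove (range fun x : ↥X => |f x - g x|) := by
  obtain ⟨x₀⟩ := ‹Nonempty ↥X›
  refine ⟨f x₀ + g x₀, ?_⟩
  rintro _ ⟨x, rfl⟩
  have h1 := ts_lip hf x x₀
  have h2 := ts_tri hf x x₀
  have h3 := ts_lip hg x x₀
  have h4 := ts_tri hg x x₀
  have d1 : dist (x₀ : α) (x : α) = dist (x : α) (x₀ : α) := dist_comm _ _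
  rw [abs_le]
  constructor <;> linarith

lemma dT_le [Nonempty ↥X] {f g : ↥X → ℝ} {c : ℝ} (h : ∀ x, |f x - g x| ≤ c) : dT f g ≤ c :=
  ciSup_le h

lemma abs_le_dT [Nonempty ↥X] {f g : ↥X → ℝ} (hf : f ∈ TightSpanSet X)
    (hg : g ∈ TightSpanSet X) (x : ↥X) : |f x - g x| ≤ dT f g :=
  le_ciSup (ts_bdd hf hg) x

lemma dT_self [Nonempty ↥X] (f : ↥X → ℝ) : dT f f = 0 := by
  simp [dT, sub_self, abs_zero, ciSup_const]

lemma dT_comm (f g : ↥X → ℝ) : dT f g = dT g f := by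
  unfold dT
  exact iSup_congr fun x => abs_sub_comm _ _

lemma dT_nonneg [Nonempty ↥X] {f g : ↥X → ℝ} (hf : f ∈ TightSpanSet X)
    (hg : g ∈ TightSpanSet X) : 0 ≤ dT f g := by
  obtain ⟨x₀⟩ := ‹Nonempty ↥X›
  exact le_trans (abs_nonneg _) (abs_le_dT hf hg x₀)

lemma dT_triangle [Nonempty ↥X] {f g h : ↥X → ℝ} (hf : f ∈ TightSpanSet X)
    (hg : g ∈ TightSpanSet X) (hh : h ∈ TightSpanSet X) : dT f h ≤ dT f g + dT g h :=
  dT_le fun x => le_trans (abs_sub_le _ _ _) (add_le_add (abs_le_dT hf hg x) (abs_le_dT hg hh x))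

lemma dT_eq_zero [Nonempty ↥X] {f g : ↥X → ℝ} (hf : f ∈ TightSpanSet X)
    (hg : g ∈ TightSpanSet X) (h : dT f g ≤ 0) : f = g := by
  funext x
  have := abs_le_dT hf hg x
  have h2 : |f x - g x| ≤ 0 := le_trans this h
  have := abs_nonneg (f x - g x)
  have : |f x - g x| = 0 := le_antisymm h2 this
  have := abs_eq_zero.mp this
  linarith

lemma dT_eX [Nonempty ↥X] {f : ↥X → ℝ} (hf : f ∈ TightSpanSet X) (x : ↥X) :
    dT f (eX x) = f x := by
  refine le_antisymm (dT_le fun y => ?_) ?_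
  · have h1 := ts_lip hf y x
    have h2 := ts_tri hf x y
    rw [abs_le]
    constructor <;> simp only [eX] <;> linarith [dist_comm (x : α) (y : α)]
  · have := abs_le_dT hf (eX_mem x) x
    simp only [eX, dist_self] at this
    calc f x = |f x - 0| := by rw [sub_zero, abs_of_nonneg (ts_nonneg hf x)]
      _ ≤ dT f (eX x) := this

lemma dT_eX_eX [Nonempty ↥X] (x y : ↥X) : dT (eX x) (eX y) = dist (x : α) (y : α) := by
  rw [dT_eX (eX_mem x) y]
  rfl


lemma ts_approx [Nonempty ↥X] {f : ↥X → ℝ}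
    (h : ∀ ε : ℝ, 0 < ε → ∃ g ∈ TightSpanSet X, ∀ x, |f x - g x| ≤ ε) :
    f ∈ TightSpanSet X := by
  have hnn : ∀ x : ↥X, 0 ≤ f x := by
    intro x
    refine le_of_forall_pos_le_add fun ε hε => ?_
    obtain ⟨g, hg, hfg⟩ := h ε hε
    have := (abs_le.mp (hfg x)).1
    have := ts_nonneg hg x
    linarith
  have htri : ∀ x y : ↥X, dist (x:α) (y:α) ≤ f x + f y := by
    intro x y
    refine le_of_forall_pos_le_add fun ε hε => ?_
    obtain ⟨g, hg, hfg⟩ := h (ε/2) (by linarith)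
    have h1 := (abs_le.mp (hfg x)).1
    have h2 := (abs_le.mp (hfg y)).1
    have := ts_tri hg x y
    linarith
  refine ⟨hnn, htri, fun x => ?_⟩
  have hbb : BddBelow (range fun y : ↥X => f x + f y - dist (x:α) (y:α)) := by
    refine ⟨0, ?_⟩
    rintro _ ⟨y, rfl⟩
    show (0:ℝ) ≤ f x + f y - dist (x:α) (y:α)
    have := htri x y
    linarith
  refine le_antisymm ?_ (le_ciInf fun y => ?_)
  swap
  · show (0:ℝ) ≤ f x + f y - dist (x:α) (y:α)
    have := htri x y
    linarith
  have hlt : ∀ ε : ℝ, 0 < ε → (⨅ y : X, (f x + f y - dist (x:α) (y:α))) ≤ ε := by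
    intro ε hε
    obtain ⟨g, hg, hfg⟩ := h (ε/4) (by linarith)
    obtain ⟨y, hy⟩ := ts_eps hg x (show (0:ℝ) < ε/2 by linarith)
    have h1 := (abs_le.mp (hfg x)).2
    have h2 := (abs_le.mp (hfg y)).2
    refine le_trans (ciInf_le hbb y) ?_
    show f x + f y - dist (x:α) (y:α) ≤ ε
    linarith
  by_contra hcon
  push_neg at hcon
  have := hlt _ (by linarith : (0:ℝ) < (⨅ y : X, (f x + f y - dist (x:α) (y:α)))/2)
  linarith

lemma ts_hyperconvex [Nonempty ↥X] (ι : Type*) (F : ι → (↥X → ℝ))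
    (hF : ∀ i, F i ∈ TightSpanSet X)
    (r : ι → ℝ) (hr : ∀ i j, dT (F i) (F j) ≤ r i + r j) :
    ∃ g ∈ TightSpanSet X, ∀ i, dT g (F i) ≤ r i := by
  rcases isEmpty_or_nonempty ι with hι | hι
  · obtain ⟨x₀⟩ := ‹Nonempty ↥X›
    exact ⟨eX x₀, eX_mem x₀, fun i => isEmptyElim i⟩
  obtain ⟨j₀⟩ := hι
  haveI : Nonempty ι := ⟨j₀⟩
  have hr0 : ∀ i, 0 ≤ r i := by
    intro i
    have := hr i i
    rw [dT_self] at this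
    linarith
  set g₀ : ↥X → ℝ := fun x => ⨅ i, (F i x + r i) with hg₀def
  have hbb : ∀ x : ↥X, BddBelow (range fun i => F i x + r i) := by
    intro x
    refine ⟨F j₀ x - r j₀, ?_⟩
    rintro _ ⟨i, rfl⟩
    show F j₀ x - r j₀ ≤ F i x + r i
    have h1 : |F i x - F j₀ x| ≤ r i + r j₀ := le_trans (abs_le_dT (hF i) (hF j₀) x) (hr i j₀)
    have := (abs_le.mp h1).1
    linarith
  have hg₀le : ∀ i x, g₀ x ≤ F i x + r i := fun i x => by
    have := ciInf_le (hbb x) i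
    exact this
  have hg₀tri : ∀ x y : ↥X, dist (x:α) (y:α) ≤ g₀ x + g₀ y := by
    intro x y
    have key : ∀ j, dist (x:α) (y:α) - (F j y + r j) ≤ g₀ x := by
      intro j
      refine le_ciInf fun i => ?_
      show dist (x:α) (y:α) - (F j y + r j) ≤ F i x + r i
      have h1 := ts_tri (hF i) x y
      have h2 : |F i y - F j y| ≤ r i + r j := le_trans (abs_le_dT (hF i) (hF j) y) (hr i j)
      have := (abs_le.mp h2).2
      linarith
    have h2 : dist (x:α) (y:α) - g₀ x ≤ g₀ y := by
      refine le_ciInf fun j => ?_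
      show dist (x:α) (y:α) - g₀ x ≤ F j y + r j
      have := key j
      linarith
    linarith
  set Q : Set ((↥X → ℝ)ᵒᵈ) :=
    {h | (∀ x y : ↥X, dist (x:α) (y:α) ≤ OrderDual.ofDual h x + OrderDual.ofDual h y) ∧
       ∀ x, OrderDual.ofDual h x ≤ g₀ x} with hQdef
  have hchainQ : ∀ c ⊆ Q, IsChain (· ≤ ·) c → ∀ y ∈ c, ∃ ub ∈ Q, ∀ z ∈ c, z ≤ ub := by
    intro c hcQ hchain y hyc
    haveI : Nonempty ↥c := ⟨⟨y, hyc⟩⟩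
    have hbb2 : ∀ x : ↥X, BddBelow (range fun h : ↥c => OrderDual.ofDual (h : (↥X → ℝ)ᵒᵈ) x) := by
      intro x
      refine ⟨0, ?_⟩
      rintro _ ⟨h, rfl⟩
      show (0:ℝ) ≤ OrderDual.ofDual (h : (↥X → ℝ)ᵒᵈ) x
      have := (hcQ h.2).1 x x
      simp only [dist_self] at this
      linarith
    set hinf : ↥X → ℝ := fun x => ⨅ h : ↥c, OrderDual.ofDual (h : (↥X → ℝ)ᵒᵈ) x with hinfdef
    refine ⟨OrderDual.toDual hinf, ⟨?_, ?_⟩, ?_⟩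
    · intro x y'
      refine le_of_forall_pos_le_add fun ε hε => ?_
      show dist (x:α) (y':α) ≤ hinf x + hinf y' + ε
      obtain ⟨h₁, hh₁⟩ : ∃ h : ↥c, OrderDual.ofDual (h : (↥X → ℝ)ᵒᵈ) x < hinf x + ε/2 := by
        refine exists_lt_of_ciInf_lt ?_
        show hinf x < hinf x + ε/2
        linarith
      obtain ⟨h₂, hh₂⟩ : ∃ h : ↥c, OrderDual.ofDual (h : (↥X → ℝ)ᵒᵈ) y' < hinf y' + ε/2 := by
        refine exists_lt_of_ciInf_lt ?_
        show hinf y' < hinf y' + ε/2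
        linarith
      rcases eq_or_ne (h₁ : (↥X → ℝ)ᵒᵈ) (h₂ : (↥X → ℝ)ᵒᵈ) with heq | hne
      · have := (hcQ h₂.2).1 x y'
        rw [heq] at hh₁
        linarith
      rcases hchain.total h₁.2 h₂.2 with hle | hle
      · have hpt : OrderDual.ofDual (h₂ : (↥X → ℝ)ᵒᵈ) ≤ OrderDual.ofDual (h₁ : (↥X → ℝ)ᵒᵈ) := hle
        have := (hcQ h₂.2).1 x y'
        have := hpt x
        linarith
      · have hpt : OrderDual.ofDual (h₁ : (↥X → ℝ)ᵒᵈ) ≤ OrderDual.ofDual (h₂ : (↥X → ℝ)ᵒᵈ) := hle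
        have := (hcQ h₁.2).1 x y'
        have := hpt y'
        linarith
    · intro x
      show OrderDual.ofDual (OrderDual.toDual hinf) x ≤ g₀ x
      have h1 : hinf x ≤ OrderDual.ofDual y x := ciInf_le (hbb2 x) ⟨y, hyc⟩
      exact le_trans h1 ((hcQ hyc).2 x)
    · intro z hz
      rw [OrderDual.le_toDual]
      refine Pi.le_def.mpr fun x => ?_
      have := ciInf_le (hbb2 x) ⟨z, hz⟩
      exact this
  obtain ⟨m, _, hmax⟩ := zorn_le_nonempty₀ Q hchainQ (OrderDual.toDual g₀)
    ⟨fun x y => hg₀tri x y, fun x => le_refl _⟩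
  have hmQ : m ∈ Q := hmax.prop
  set h : ↥X → ℝ := OrderDual.ofDual m with hdef
  have hnn : ∀ x, 0 ≤ h x := by
    intro x
    have := hmQ.1 x x
    simp only [dist_self] at this
    linarith
  have hts : h ∈ TightSpanSet X := by
    classical
    refine ⟨hnn, hmQ.1, fun x => ?_⟩
    have hbb3 : BddBelow (range fun y : ↥X => h x + h y - dist (x:α) (y:α)) := by
      refine ⟨0, ?_⟩
      rintro _ ⟨y, rfl⟩
      show (0:ℝ) ≤ h x + h y - dist (x:α) (y:α)
      have := hmQ.1 x y
      linarith
    have hge : (0:ℝ) ≤ ⨅ y : X, (h x + h y - dist (x:α) (y:α)) :=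
      le_ciInf fun y => by have := hmQ.1 x y; linarith
    by_contra hne
    have hδ : (0:ℝ) < ⨅ y : X, (h x + h y - dist (x:α) (y:α)) := lt_of_le_of_ne hge (Ne.symm hne)
    set δ : ℝ := ⨅ y : X, (h x + h y - dist (x:α) (y:α)) with hδdef
    have hδle : ∀ y : ↥X, δ ≤ h x + h y - dist (x:α) (y:α) := fun y => by
      have := ciInf_le hbb3 y
      exact this
    have hδ2hx : δ ≤ 2 * h x := by
      have := hδle x
      simp only [dist_self] at this
      linarith
    set h' : ↥X → ℝ := fun y => if y = x then h x - δ/2 else h y with h'def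
    have h'x : h' x = h x - δ/2 := by simp [h'def]
    have h'ne : ∀ y : ↥X, y ≠ x → h' y = h y := by intro y hy; simp [h'def, hy]
    have h'tri : ∀ z w : ↥X, dist (z:α) (w:α) ≤ h' z + h' w := by
      intro z w
      by_cases hz : z = x <;> by_cases hw : w = x
      · rw [hz, hw, h'x, dist_self]
        linarith
      · rw [hz, h'x, h'ne w hw]
        have := hδle w
        linarith
      · rw [hw, h'ne z hz, h'x]
        have := hδle z
        have hcm := dist_comm (z:α) (x:α)
        linarith
      · rw [h'ne z hz, h'ne w hw]
        exact hmQ.1 z w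
    have h'le : ∀ y, h' y ≤ g₀ y := by
      intro y
      by_cases hy : y = x
      · rw [hy, h'x]
        have := hmQ.2 x
        linarith
      · rw [h'ne y hy]
        exact hmQ.2 y
    have hmle : m ≤ OrderDual.toDual h' := by
      rw [OrderDual.le_toDual]
      refine Pi.le_def.mpr fun y => ?_
      by_cases hy : y = x
      · rw [hy, h'x]
        linarith
      · rw [h'ne y hy]
    have hQ' : OrderDual.toDual h' ∈ Q := ⟨h'tri, h'le⟩
    have hcontra := hmax.2 hQ' hmle
    rw [OrderDual.toDual_le] at hcontra
    have := Pi.le_def.mp hcontra x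
    rw [h'x] at this
    linarith
  refine ⟨h, hts, fun i => ?_⟩
  refine dT_le fun x => abs_le.mpr ⟨?_, ?_⟩
  · have key : F i x - h x ≤ r i := by
      have : ∀ ε : ℝ, 0 < ε → F i x - h x ≤ r i + ε := by
        intro ε hε
        obtain ⟨y, hy⟩ := ts_eps (hF i) x hε
        have h1 := hmQ.1 x y
        have h2 : h y ≤ g₀ y := hmQ.2 y
        have h3 := hg₀le i y
        linarith
      exact le_of_forall_pos_le_add this
    linarith
  · have h1 : h x ≤ g₀ x := hmQ.2 x
    have h2 := hg₀le i x
    linarith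

section Extend

lemma extend_nonexpansive {M W : Type} (dM : M → M → ℝ) (dW : W → W → ℝ) (T : Set W)
    (hdM0 : ∀ a, dM a a = 0) (hdMsymm : ∀ a b, dM a b = dM b a)
    (hdMtri : ∀ a b c, dM a c ≤ dM a b + dM b c)
    (hWrefl : ∀ w ∈ T, dW w w ≤ 0)
    (hWsymm : ∀ w w', dW w w' = dW w' w)
    (hWsep : ∀ w ∈ T, ∀ w' ∈ T, dW w w' ≤ 0 → w = w')
    (hT : ∀ (ι : Type) (c : ι → W) (r : ι → ℝ), (∀ i, c i ∈ T) →
      (∀ i j, dW (c i) (c j) ≤ r i + r j) → ∃ z ∈ T, ∀ i, dW z (c i) ≤ r i)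
    (A : Set M) (φ₀ : M → W)
    (hφ₀T : ∀ a ∈ A, φ₀ a ∈ T)
    (hφ₀ : ∀ a ∈ A, ∀ b ∈ A, dW (φ₀ a) (φ₀ b) ≤ dM a b) :
    ∃ φ : M → W, (∀ m, φ m ∈ T) ∧ (∀ a b, dW (φ a) (φ b) ≤ dM a b) ∧ ∀ a ∈ A, φ a = φ₀ a := by
  set S : Set (Set (M × W)) :=
    {G | (∀ p ∈ G, p.2 ∈ T) ∧ (∀ p ∈ G, ∀ q ∈ G, dW p.2 q.2 ≤ dM p.1 q.1)} with hSdef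
  set G₀ : Set (M × W) := (fun a => (a, φ₀ a)) '' A with hG₀def
  have hG₀S : G₀ ∈ S := by
    constructor
    · rintro p ⟨a, ha, rfl⟩
      exact hφ₀T a ha
    · rintro p ⟨a, ha, rfl⟩ q ⟨b, hb, rfl⟩
      exact hφ₀ a ha b hb
  have hchain : ∀ c ⊆ S, IsChain (· ⊆ ·) c → c.Nonempty → ∃ ub ∈ S, ∀ s ∈ c, s ⊆ ub := by
    intro c hcS hch hcne
    refine ⟨⋃₀ c, ⟨?_, ?_⟩, fun s hs => Set.subset_sUnion_of_mem hs⟩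
    · rintro p ⟨G, hG, hp⟩
      exact (hcS hG).1 p hp
    · rintro p ⟨G₁, hG₁, hp⟩ q ⟨G₂, hG₂, hq⟩
      rcases eq_or_ne G₁ G₂ with rfl | hne
      · exact (hcS hG₁).2 p hp q hq
      rcases hch hG₁ hG₂ hne with hle | hle
      · exact (hcS hG₂).2 p (hle hp) q hq
      · exact (hcS hG₁).2 p hp q (hle hq)
  obtain ⟨G, hG₀G, hGmax⟩ := zorn_subset_nonempty S hchain G₀ hG₀S
  have hGS : G ∈ S := hGmax.prop
  have htot : ∀ m : M, ∃ w, (m, w) ∈ G := by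
    intro m
    by_contra hno
    push_neg at hno
    have hpw : ∀ p q : ↥G, dW ((p : M × W).2) ((q : M × W).2) ≤ dM m (p : M × W).1 + dM m (q : M × W).1 := by
      intro p q
      have h1 := hGS.2 p p.2 q q.2
      have h2 := hdMtri (p : M × W).1 m (q : M × W).1
      have h3 := hdMsymm (p : M × W).1 m
      linarith
    obtain ⟨z, hzT, hz⟩ := hT (↥G) (fun p => (p : M × W).2) (fun p => dM m (p : M × W).1)
      (fun p => hGS.1 p p.2) hpw
    have hG'S : insert (m, z) G ∈ S := by
      constructor
      · rintro p hp
        rcases Set.mem_insert_iff.mp hp with rfl | hp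
        · exact hzT
        · exact hGS.1 p hp
      · rintro p hp q hq
        rcases Set.mem_insert_iff.mp hp with rfl | hp <;>
          rcases Set.mem_insert_iff.mp hq with hq' | hq'
        · rw [hq']
          show dW z z ≤ dM m m
          rw [hdM0]
          exact hWrefl z hzT
        · exact hz ⟨q, hq'⟩
        · rw [hq']
          show dW p.2 z ≤ dM p.1 m
          rw [hWsymm _ _, hdMsymm _ _]
          exact hz ⟨p, hp⟩
        · exact hGS.2 p hp q hq'
    have hsub : G ⊆ insert (m, z) G := Set.subset_insert _ _
    have hins := hGmax.2 hG'S hsub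
    exact hno z (hins (Set.mem_insert _ _))
  set φ : M → W := fun m => (htot m).choose with hφdef
  have hφG : ∀ m, (m, φ m) ∈ G := fun m => (htot m).choose_spec
  have hφT : ∀ m, φ m ∈ T := fun m => hGS.1 _ (hφG m)
  refine ⟨φ, hφT, fun a b => hGS.2 _ (hφG a) _ (hφG b), fun a ha => ?_⟩
  have h1 : (a, φ₀ a) ∈ G := hG₀G ⟨a, ha, rfl⟩
  have h2 := hGS.2 _ (hφG a) _ h1
  rw [hdM0] at h2
  exact hWsep _ (hφT a) _ (hφ₀T a ha) h2

end Extend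

section Plane
open Set

def uu (p : ℝ × ℝ) : ℝ := p.1 + p.2
def vv (p : ℝ × ℝ) : ℝ := p.1 - p.2

lemma max_abs_half (A B : ℝ) : max |A| |B| = (|A + B| + |A - B|)/2 := by
  rcases abs_cases A with ⟨h1,h2⟩|⟨h1,h2⟩ <;> rcases abs_cases B with ⟨h3,h4⟩|⟨h3,h4⟩ <;>
    rcases abs_cases (A+B) with ⟨h5,h6⟩|⟨h5,h6⟩ <;>
    rcases abs_cases (A-B) with ⟨h7,h8⟩|⟨h7,h8⟩ <;>
    rcases max_cases |A| |B| with ⟨h9,h10⟩|⟨h9,h10⟩ <;> linarith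

lemma dist_xy (p q : ℝ × ℝ) : dist p q = max |p.1 - q.1| |p.2 - q.2| := by
  rw [Prod.dist_eq, Real.dist_eq, Real.dist_eq]

lemma dist_uv (p q : ℝ × ℝ) : dist p q = (|uu p - uu q| + |vv p - vv q|)/2 := by
  rw [dist_xy, max_abs_half]
  have e1 : p.1 - q.1 + (p.2 - q.2) = uu p - uu q := by simp only [uu]; ring
  have e2 : p.1 - q.1 - (p.2 - q.2) = vv p - vv q := by simp only [vv]; ring
  rw [e1, e2]

lemma dist_fst_le (p q : ℝ × ℝ) : |p.1 - q.1| ≤ dist p q := by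
  rw [dist_xy]; exact le_max_left _ _

lemma dist_snd_le (p q : ℝ × ℝ) : |p.2 - q.2| ≤ dist p q := by
  rw [dist_xy]; exact le_max_right _ _

lemma duu_le (p q : ℝ × ℝ) : |uu p - uu q| ≤ 2 * dist p q := by
  rw [dist_uv]
  have := abs_nonneg (vv p - vv q)
  linarith

lemma dvv_le (p q : ℝ × ℝ) : |vv p - vv q| ≤ 2 * dist p q := by
  rw [dist_uv]
  have := abs_nonneg (uu p - uu q)
  linarith

lemma real_between {a b c : ℝ} (h : |a - c| + |c - b| = |a - b|) : c ∈ Set.uIcc a b := by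
  rw [Set.mem_uIcc]
  rcases le_total a b with hab | hab
  · left
    constructor
    · by_contra hc
      push_neg at hc
      have h1 : |a - c| = a - c := abs_of_pos (by linarith)
      have h2 : |a - b| = b - a := by rw [abs_sub_comm]; exact abs_of_nonneg (by linarith)
      have h3 : b - c ≤ |c - b| := by rw [abs_sub_comm]; exact le_abs_self _
      linarith
    · by_contra hc
      push_neg at hc
      have h1 : |c - b| = c - b := abs_of_pos (by linarith)
      have h2 : |a - b| = b - a := by rw [abs_sub_comm]; exact abs_of_nonneg (by linarith)
      have h3 : c - a ≤ |a - c| := by rw [abs_sub_comm]; exact le_abs_self _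
      linarith
  · right
    constructor
    · by_contra hc
      push_neg at hc
      have h1 : |c - b| = b - c := by rw [abs_sub_comm]; exact abs_of_pos (by linarith)
      have h2 : |a - b| = a - b := abs_of_nonneg (by linarith)
      have h3 : a - c ≤ |a - c| := le_abs_self _
      linarith
    · by_contra hc
      push_neg at hc
      have h1 : |a - c| = c - a := by rw [abs_sub_comm]; exact abs_of_pos (by linarith)
      have h2 : |a - b| = a - b := abs_of_nonneg (by linarith)
      have h3 : c - b ≤ |c - b| := le_abs_self _
      linarith

lemma between_uv {p q z : ℝ × ℝ} (h : dist p z + dist z q = dist p q) :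
    uu z ∈ Set.uIcc (uu p) (uu q) ∧ vv z ∈ Set.uIcc (vv p) (vv q) := by
  have h1 := dist_uv p z
  have h2 := dist_uv z q
  have h3 := dist_uv p q
  have tu : |uu p - uu q| ≤ |uu p - uu z| + |uu z - uu q| := abs_sub_le _ _ _
  have tv : |vv p - vv q| ≤ |vv p - vv z| + |vv z - vv q| := abs_sub_le _ _ _
  have equ : |uu p - uu z| + |uu z - uu q| = |uu p - uu q| := by linarith
  have eqv : |vv p - vv z| + |vv z - vv q| = |vv p - vv q| := by linarith
  exact ⟨real_between equ, real_between eqv⟩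

lemma geo_dist_left {p q : ℝ × ℝ} {γ : ℝ → ℝ × ℝ} (hγ : IsGeodesic p q γ) {t : ℝ}
    (ht : t ∈ Set.Icc 0 (dist p q)) : dist p (γ t) = t := by
  have h0 : (0:ℝ) ∈ Set.Icc 0 (dist p q) := ⟨le_refl _, dist_nonneg⟩
  have h := hγ.2.2 0 h0 t ht
  rw [hγ.1] at h
  rw [h, zero_sub, abs_neg, abs_of_nonneg ht.1]

lemma geo_dist_right {p q : ℝ × ℝ} {γ : ℝ → ℝ × ℝ} (hγ : IsGeodesic p q γ) {t : ℝ}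
    (ht : t ∈ Set.Icc 0 (dist p q)) : dist (γ t) q = dist p q - t := by
  have hD : dist p q ∈ Set.Icc 0 (dist p q) := ⟨dist_nonneg, le_refl _⟩
  have h := hγ.2.2 t ht (dist p q) hD
  rw [hγ.2.1] at h
  rw [h, abs_sub_comm, abs_of_nonneg (by linarith [ht.2] : (0:ℝ) ≤ dist p q - t)]

lemma geo_between {p q : ℝ × ℝ} {γ : ℝ → ℝ × ℝ} (hγ : IsGeodesic p q γ) {t : ℝ}
    (ht : t ∈ Set.Icc 0 (dist p q)) : dist p (γ t) + dist (γ t) q = dist p q := by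
  rw [geo_dist_left hγ ht, geo_dist_right hγ ht]
  ring

lemma geo_cont_vv {p q : ℝ × ℝ} {γ : ℝ → ℝ × ℝ} (hγ : IsGeodesic p q γ) :
    ContinuousOn (fun t => vv (γ t)) (Set.Icc 0 (dist p q)) := by
  refine Metric.continuousOn_iff.mpr fun t ht ε hε => ⟨ε/4, by linarith, fun s hs hst => ?_⟩
  have h1 : |vv (γ s) - vv (γ t)| ≤ 2 * dist (γ s) (γ t) := dvv_le _ _
  have h2 : dist (γ s) (γ t) = |s - t| := hγ.2.2 s hs t ht
  rw [Real.dist_eq] at hst ⊢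
  rw [h2] at h1
  calc |vv (γ s) - vv (γ t)| ≤ 2 * |s - t| := h1
    _ < ε := by linarith

lemma pure_u_move {Y : Set (ℝ × ℝ)} (hYg : GeodConvex Y) {n : ℕ} [Nonempty (Fin n)]
    (c : Fin n → ℝ × ℝ) (r : Fin n → ℝ) (z w : ℝ × ℝ) (hz : z ∈ Y) (hw : w ∈ Y)
    (m : ℝ) (hm : 0 < m)
    (hvw : vv w = vv z) (huw : uu z < uu w)
    (hdist : ∀ i, dist z (c i) ≤ r i + m)
    (hup : ∀ i, dist z (c i) = r i + m → uu z < uu (c i)) :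
    ∃ y ∈ Y, ∀ i, dist y (c i) < r i + m := by
  classical
  have hL : dist z w = (uu w - uu z)/2 := by
    rw [dist_uv, hvw]
    rw [abs_sub_comm, abs_of_pos (by linarith), sub_self, abs_zero]
    ring
  set L : ℝ := (uu w - uu z)/2 with hLdef
  have hLpos : 0 < L := by simp only [hLdef]; linarith
  obtain ⟨γ, hγ, hγY⟩ := hYg z hz w hw
  set δ : Fin n → ℝ := fun i =>
    if dist z (c i) = r i + m then (uu (c i) - uu z)/2 else (r i + m - dist z (c i))/2 with hδdef
  have hδpos : ∀ i, 0 < δ i := by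
    intro i
    by_cases hact : dist z (c i) = r i + m
    · have h := hup i hact
      simp only [hδdef, if_pos hact]
      linarith
    · have h2 : dist z (c i) < r i + m := lt_of_le_of_ne (hdist i) hact
      simp only [hδdef, if_neg hact]
      linarith
  set t₀ : ℝ := min L (Finset.univ.inf' Finset.univ_nonempty δ) with ht₀def
  have ht₀pos : 0 < t₀ := by
    refine lt_min hLpos ?_
    refine Finset.lt_inf'_iff _ |>.mpr fun i _ => hδpos i
  have ht₀le : ∀ i, t₀ ≤ δ i := fun i =>
    le_trans (min_le_right _ _) (Finset.inf'_le _ (Finset.mem_univ i))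
  have ht₀L : t₀ ≤ L := min_le_left _ _
  have ht₀mem : t₀ ∈ Set.Icc 0 (dist z w) := by
    rw [hL]
    exact ⟨le_of_lt ht₀pos, ht₀L⟩
  set y : ℝ × ℝ := γ t₀ with hydef
  have hyY : y ∈ Y := hγY t₀ ht₀mem
  have hdzy : dist z y = t₀ := geo_dist_left hγ ht₀mem
  have hbet : dist z y + dist y w = dist z w := geo_between hγ ht₀mem
  obtain ⟨hu_mem, hv_mem⟩ := between_uv hbet
  have hvy : vv y = vv z := by
    rw [hvw] at hv_mem
    rw [Set.uIcc_self] at hv_mem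
    exact hv_mem
  have huy : uu y = uu z + 2 * t₀ := by
    have h1 := dist_uv z y
    rw [hdzy, hvy, sub_self, abs_zero] at h1
    have h2 : |uu z - uu y| = 2 * t₀ := by linarith
    have h3 : uu z ≤ uu y := by
      rw [Set.mem_uIcc] at hu_mem
      rcases hu_mem with ⟨h, _⟩ | ⟨h, h'⟩
      · exact h
      · linarith
    rw [abs_sub_comm, abs_of_nonneg (by linarith)] at h2
    linarith
  refine ⟨y, hyY, fun i => ?_⟩
  by_cases hact : dist z (c i) = r i + m
  · have hδi : δ i = (uu (c i) - uu z)/2 := by simp only [hδdef, if_pos hact]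
    have hupi := hup i hact
    have ht₀δ : t₀ ≤ (uu (c i) - uu z)/2 := by rw [← hδi]; exact ht₀le i
    have h1 : dist y (c i) = (|uu y - uu (c i)| + |vv y - vv (c i)|)/2 := dist_uv _ _
    have h2 : dist z (c i) = (|uu z - uu (c i)| + |vv z - vv (c i)|)/2 := dist_uv _ _
    have h3 : |uu y - uu (c i)| = |uu z - uu (c i)| - 2 * t₀ := by
      rw [huy]
      have e1 : |uu z - uu (c i)| = uu (c i) - uu z := by
        rw [abs_sub_comm]; exact abs_of_pos (by linarith)
      have e2 : |uu z + 2*t₀ - uu (c i)| = uu (c i) - uu z - 2*t₀ := by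
        rw [abs_sub_comm, show uu (c i) - (uu z + 2*t₀) = uu (c i) - uu z - 2*t₀ from by ring]
        exact abs_of_nonneg (by linarith)
      rw [e1, e2]
    have h4 : vv y = vv z := hvy
    rw [h4] at h1
    rw [h1, h3]
    have := hact
    linarith [hact, h2, ht₀pos]
  · have h1 : dist z (c i) < r i + m := lt_of_le_of_ne (hdist i) hact
    have hδi : δ i = (r i + m - dist z (c i))/2 := by simp only [hδdef, if_neg hact]
    have ht₀δ : t₀ ≤ (r i + m - dist z (c i))/2 := by rw [← hδi]; exact ht₀le i
    have h2 : dist y (c i) ≤ dist y z + dist z (c i) := dist_triangle _ _ _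
    have h3 : dist y z = t₀ := by rw [dist_comm]; exact hdzy
    linarith

lemma helly_coreE {Y : Set (ℝ × ℝ)} (hYg : GeodConvex Y) {n : ℕ}
    (c : Fin n → ℝ × ℝ) (r : Fin n → ℝ) (hcY : ∀ i, c i ∈ Y)
    (z : ℝ × ℝ) (hzY : z ∈ Y) (m : ℝ) (hm : 0 < m)
    (hr : ∀ i, 0 ≤ r i)
    (hdist : ∀ i, dist z (c i) ≤ r i + m)
    (hminY : ∀ y ∈ Y, ∃ i, r i + m ≤ dist y (c i))
    (hE : ∃ i, dist z (c i) = r i + m ∧ (c i).1 - z.1 = r i + m)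
    (hW : ∀ i, dist z (c i) = r i + m → z.1 - (c i).1 < r i + m)
    (hS : ∀ i, dist z (c i) = r i + m → z.2 - (c i).2 < r i + m) : False := by
  classical
  obtain ⟨e, heact, heE⟩ := hE
  haveI : Nonempty (Fin n) := ⟨e⟩
  have hxy_abs : ∀ i, dist z (c i) = r i + m →
      |z.1 - (c i).1| ≤ r i + m ∧ |z.2 - (c i).2| ≤ r i + m := by
    intro i hact
    exact ⟨hact ▸ dist_fst_le z (c i), hact ▸ dist_snd_le z (c i)⟩
  have hΔu : ∀ i, dist z (c i) = r i + m → uu z < uu (c i) := by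
    intro i hact
    have hrm : 0 < r i + m := by have := hr i; linarith
    obtain ⟨hx, hy⟩ := hxy_abs i hact
    have hWs := hW i hact
    have hSs := hS i hact
    have hmax : max |z.1 - (c i).1| |z.2 - (c i).2| = r i + m := by
      rw [← dist_xy]; exact hact
    have hxle := (abs_le.mp hx).2
    have hxge := (abs_le.mp hx).1
    have hyle := (abs_le.mp hy).2
    have hyge := (abs_le.mp hy).1
    simp only [uu]
    rcases max_cases |z.1 - (c i).1| |z.2 - (c i).2| with ⟨hc1, _⟩ | ⟨hc1, _⟩ <;>
      rw [hc1] at hmax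
    · rcases (abs_eq (le_of_lt hrm)).mp hmax with h | h
      · exact absurd h (ne_of_lt hWs)
      · linarith
    · rcases (abs_eq (le_of_lt hrm)).mp hmax with h | h
      · exact absurd h (ne_of_lt hSs)
      · linarith
  by_cases hNeg : ∃ i, dist z (c i) = r i + m ∧ vv (c i) ≤ vv z
  · -- case (a) : v-crossing between two active centers, then pure-u move
    obtain ⟨k, hkact, hkv⟩ := hNeg
    have hev : vv z ≤ vv (c e) := by
      obtain ⟨_, hy⟩ := hxy_abs e heact
      have := (abs_le.mp hy).1
      simp only [vv]
      linarith
    obtain ⟨δ', hδγ, hδY⟩ := hYg (c e) (hcY e) (c k) (hcY k)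
    have hDnn : (0:ℝ) ≤ dist (c e) (c k) := dist_nonneg
    have hIcc : Set.uIcc (0:ℝ) (dist (c e) (c k)) = Set.Icc 0 (dist (c e) (c k)) :=
      Set.uIcc_of_le hDnn
    have hcont : ContinuousOn (fun t => vv (δ' t)) (Set.uIcc 0 (dist (c e) (c k))) := by
      rw [hIcc]; exact geo_cont_vv hδγ
    have hmem : vv z ∈ Set.uIcc (vv (δ' 0)) (vv (δ' (dist (c e) (c k)))) := by
      rw [hδγ.1, hδγ.2.1, Set.mem_uIcc]
      right
      exact ⟨hkv, hev⟩
    obtain ⟨t₁, ht₁mem, ht₁⟩ := intermediate_value_uIcc hcont hmem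
    rw [hIcc] at ht₁mem
    set w : ℝ × ℝ := δ' t₁ with hwdef
    have hwY : w ∈ Y := hδY t₁ ht₁mem
    have hvw : vv w = vv z := ht₁
    have hbet : dist (c e) w + dist w (c k) = dist (c e) (c k) := geo_between hδγ ht₁mem
    have huw : uu z < uu w := by
      obtain ⟨hu_mem, _⟩ := between_uv hbet
      rw [Set.mem_uIcc] at hu_mem
      have h1 := hΔu e heact
      have h2 := hΔu k hkact
      rcases hu_mem with ⟨h, _⟩ | ⟨h, _⟩ <;> linarith
    obtain ⟨y, hyY, hylt⟩ := pure_u_move hYg c r z w hzY hwY m hm hvw huw hdist hΔu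
    obtain ⟨i, hi⟩ := hminY y hyY
    have := hylt i
    linarith
  · -- case (b) : all active centers strictly east
    push_neg at hNeg
    have hEonly : ∀ i, dist z (c i) = r i + m →
        ((c i).1 - z.1 = r i + m ∧ |z.2 - (c i).2| < r i + m) := by
      intro i hact
      have hv := hNeg i hact
      have hrm : 0 < r i + m := by have := hr i; linarith
      obtain ⟨hx, hy⟩ := hxy_abs i hact
      have hWs := hW i hact
      have hSs := hS i hact
      have hxle := (abs_le.mp hx).2
      have hxge := (abs_le.mp hx).1
      have hyle := (abs_le.mp hy).2
      have hyge := (abs_le.mp hy).1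
      simp only [vv] at hv
      have hyneq : |z.2 - (c i).2| ≠ r i + m := by
        intro hyeq
        rcases (abs_eq (le_of_lt hrm)).mp hyeq with h | h
        · exact absurd h (ne_of_lt hSs)
        · linarith
      have hylt : |z.2 - (c i).2| < r i + m := lt_of_le_of_ne hy hyneq
      have hmax : max |z.1 - (c i).1| |z.2 - (c i).2| = r i + m := by
        rw [← dist_xy]; exact hact
      have hxeq : |z.1 - (c i).1| = r i + m := by
        rcases max_cases |z.1 - (c i).1| |z.2 - (c i).2| with ⟨hc1, _⟩ | ⟨hc1, hc2⟩
        · rw [hc1] at hmax; exact hmax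
        · rw [hc1] at hmax; linarith
      rcases (abs_eq (le_of_lt hrm)).mp hxeq with h | h
      · exact absurd h (ne_of_lt hWs)
      · exact ⟨by linarith, hylt⟩
    obtain ⟨heE', heslack⟩ := hEonly e heact
    set D : ℝ := r e + m with hDdef
    have hDpos : 0 < D := by have := hr e; simp only [hDdef]; linarith
    have hdze : dist z (c e) = D := heact
    obtain ⟨γ, hγ, hγY⟩ := hYg z hzY (c e) (hcY e)
    set δ : Fin n → ℝ := fun i =>
      if dist z (c i) = r i + m then (r i + m - |z.2 - (c i).2|)/4
      else (r i + m - dist z (c i))/2 with hδdef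
    have hδpos : ∀ i, 0 < δ i := by
      intro i
      by_cases hact : dist z (c i) = r i + m
      · have h := (hEonly i hact).2
        simp only [hδdef, if_pos hact]
        linarith
      · have h2 : dist z (c i) < r i + m := lt_of_le_of_ne (hdist i) hact
        simp only [hδdef, if_neg hact]
        linarith
    set t₀ : ℝ := min (D/2) (Finset.univ.inf' Finset.univ_nonempty δ) with ht₀def
    have ht₀pos : 0 < t₀ := by
      refine lt_min (by linarith) ?_
      exact Finset.lt_inf'_iff _ |>.mpr fun i _ => hδpos i
    have ht₀le : ∀ i, t₀ ≤ δ i := fun i =>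
      le_trans (min_le_right _ _) (Finset.inf'_le _ (Finset.mem_univ i))
    have ht₀D : t₀ ≤ D/2 := min_le_left _ _
    have ht₀mem : t₀ ∈ Set.Icc 0 (dist z (c e)) := by
      rw [hdze]
      exact ⟨le_of_lt ht₀pos, by linarith⟩
    set y : ℝ × ℝ := γ t₀ with hydef
    have hyY : y ∈ Y := hγY t₀ ht₀mem
    have hdzy : dist z y = t₀ := geo_dist_left hγ ht₀mem
    have hdye : dist y (c e) = D - t₀ := by
      have := geo_dist_right hγ ht₀mem
      rw [hdze] at this
      exact this
    have hy2z : |y.2 - z.2| ≤ t₀ := by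
      have := dist_snd_le y z
      rw [dist_comm] at hdzy
      linarith [hdzy ▸ this]
    have hy1z : |y.1 - z.1| ≤ t₀ := by
      have := dist_fst_le y z
      rw [dist_comm] at hdzy
      linarith [hdzy ▸ this]
    -- second-coordinate slack at e
    have hy2e : |y.2 - (c e).2| < D - t₀ := by
      have h1 : |y.2 - (c e).2| ≤ |y.2 - z.2| + |z.2 - (c e).2| := abs_sub_le _ _ _
      have h2 : t₀ ≤ (r e + m - |z.2 - (c e).2|)/4 := by
        have := ht₀le e
        simp only [hδdef, if_pos heact] at this
        rw [if_pos (show dist z (c e) = r e + m from heact)] at this; exact this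
      simp only [hDdef]
      linarith
    -- hence first coordinate of y is pinned
    have hy1 : y.1 = z.1 + t₀ := by
      have hmax : max |y.1 - (c e).1| |y.2 - (c e).2| = D - t₀ := by
        rw [← dist_xy]; exact hdye
      have hxeq : |y.1 - (c e).1| = D - t₀ := by
        rcases max_cases |y.1 - (c e).1| |y.2 - (c e).2| with ⟨hc1, _⟩ | ⟨hc1, hc2⟩
        · rw [hc1] at hmax; exact hmax
        · rw [hc1] at hmax; linarith
      have hce1 : (c e).1 = z.1 + D := by simp only [hDdef] at heE' ⊢; linarith
      rcases (abs_eq (by linarith : (0:ℝ) ≤ D - t₀)).mp hxeq with h | h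
      · -- y.1 - (c e).1 = D - t₀ : impossible
        exfalso
        have : y.1 - z.1 = 2*D - t₀ := by rw [hce1] at h; linarith
        have habs := (abs_le.mp hy1z).2
        linarith
      · rw [hce1] at h; linarith
    refine absurd (hminY y hyY) ?_
    push_neg
    intro i
    by_cases hact : dist z (c i) = r i + m
    · obtain ⟨hiE, hislack⟩ := hEonly i hact
      have h2 : t₀ ≤ (r i + m - |z.2 - (c i).2|)/4 := by
        have := ht₀le i
        simp only [hδdef, if_pos hact] at this
        exact this
      have habs2 : (0:ℝ) ≤ |z.2 - (c i).2| := abs_nonneg _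
      have hx : |y.1 - (c i).1| = r i + m - t₀ := by
        have hci1 : (c i).1 = z.1 + (r i + m) := by linarith
        rw [hy1, hci1, show z.1 + t₀ - (z.1 + (r i + m)) = -(r i + m - t₀) from by ring,
          abs_neg]
        exact abs_of_nonneg (by linarith)
      have hy2i : |y.2 - (c i).2| ≤ r i + m - 3*t₀ := by
        have h1 : |y.2 - (c i).2| ≤ |y.2 - z.2| + |z.2 - (c i).2| := abs_sub_le _ _ _
        linarith
      rw [dist_xy]
      have : max |y.1 - (c i).1| |y.2 - (c i).2| ≤ r i + m - t₀ :=
        max_le (le_of_eq hx) (by linarith)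
      linarith
    · have h1 : dist z (c i) < r i + m := lt_of_le_of_ne (hdist i) hact
      have h2 : t₀ ≤ (r i + m - dist z (c i))/2 := by
        have := ht₀le i
        simp only [hδdef, if_neg hact] at this
        exact this
      have h3 : dist y (c i) ≤ dist y z + dist z (c i) := dist_triangle _ _ _
      rw [dist_comm] at hdzy
      linarith

lemma geodConvex_image {Y : Set (ℝ × ℝ)} (σ : ℝ × ℝ → ℝ × ℝ)
    (hσ : ∀ p q, dist (σ p) (σ q) = dist p q) (hYg : GeodConvex Y) :
    GeodConvex (σ '' Y) := by
  rintro _ ⟨p, hp, rfl⟩ _ ⟨q, hq, rfl⟩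
  obtain ⟨γ, hγ, hγY⟩ := hYg p hp q hq
  have hD : dist (σ p) (σ q) = dist p q := hσ p q
  refine ⟨σ ∘ γ, ⟨?_, ?_, ?_⟩, ?_⟩
  · show σ (γ 0) = σ p
    rw [hγ.1]
  · show σ (γ (dist (σ p) (σ q))) = σ q
    rw [hD, hγ.2.1]
  · intro s hs t ht
    rw [hD] at hs ht
    show dist (σ (γ s)) (σ (γ t)) = |s - t|
    rw [hσ, hγ.2.2 s hs t ht]
  · intro t ht
    rw [hD] at ht
    exact ⟨γ t, hγY t ht, rfl⟩

lemma helly_transport {Y : Set (ℝ × ℝ)} (hYg : GeodConvex Y) {n : ℕ}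
    (c : Fin n → ℝ × ℝ) (r : Fin n → ℝ) (hcY : ∀ i, c i ∈ Y)
    (z : ℝ × ℝ) (hzY : z ∈ Y) (m : ℝ) (hm : 0 < m) (hr : ∀ i, 0 ≤ r i)
    (hdist : ∀ i, dist z (c i) ≤ r i + m)
    (hminY : ∀ y ∈ Y, ∃ i, r i + m ≤ dist y (c i))
    (σ : ℝ × ℝ → ℝ × ℝ) (hσ : ∀ p q, dist (σ p) (σ q) = dist p q)
    (hE : ∃ i, dist z (c i) = r i + m ∧ (σ (c i)).1 - (σ z).1 = r i + m)
    (hW : ∀ i, dist z (c i) = r i + m → (σ z).1 - (σ (c i)).1 < r i + m)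
    (hS : ∀ i, dist z (c i) = r i + m → (σ z).2 - (σ (c i)).2 < r i + m) : False := by
  refine helly_coreE (geodConvex_image σ hσ hYg) (fun i => σ (c i)) r
      (fun i => ⟨c i, hcY i, rfl⟩) (σ z) ⟨z, hzY, rfl⟩ m hm hr
      (fun i => by rw [hσ]; exact hdist i) ?_ ?_ ?_ ?_
  · rintro _ ⟨y, hy, rfl⟩
    obtain ⟨i, hi⟩ := hminY y hy
    exact ⟨i, by rw [hσ]; exact hi⟩
  · obtain ⟨i, h1, h2⟩ := hE
    exact ⟨i, by rw [hσ]; exact h1, h2⟩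
  · intro i hact
    rw [hσ] at hact
    exact hW i hact
  · intro i hact
    rw [hσ] at hact
    exact hS i hact

lemma helly_finite {Y : Set (ℝ × ℝ)} (hYg : GeodConvex Y) (hYc : IsClosed Y) (hYne : Y.Nonempty)
    {n : ℕ} (c : Fin n → ℝ × ℝ) (r : Fin n → ℝ) (hcY : ∀ i, c i ∈ Y)
    (hpair : ∀ i j, dist (c i) (c j) ≤ r i + r j) :
    ∃ z ∈ Y, ∀ i, dist z (c i) ≤ r i := by
  rcases Nat.eq_zero_or_pos n with rfl | hn
  · exact ⟨hYne.choose, hYne.choose_spec, fun i => i.elim0⟩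
  haveI : Nonempty (Fin n) := ⟨⟨0, hn⟩⟩
  have hr0 : ∀ i, 0 ≤ r i := by
    intro i
    have h := hpair i i
    rw [dist_self] at h
    linarith
  set F : ℝ × ℝ → ℝ := fun z => ⨆ i, (dist z (c i) - r i) with hFdef
  have hbdd : ∀ z : ℝ × ℝ, BddAbove (Set.range fun i => dist z (c i) - r i) :=
    fun z => (Set.finite_range _).bddAbove
  have hFle : ∀ (z : ℝ × ℝ) (a : ℝ), (∀ i, dist z (c i) - r i ≤ a) → F z ≤ a :=
    fun z a h => ciSup_le h
  have hleF : ∀ (z : ℝ × ℝ) (i : Fin n), dist z (c i) - r i ≤ F z :=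
    fun z i => le_ciSup (hbdd z) i
  have hFlip : ∀ z z' : ℝ × ℝ, F z ≤ F z' + dist z z' := by
    intro z z'
    refine hFle _ _ fun i => ?_
    have h1 := hleF z' i
    have h2 : dist z (c i) ≤ dist z z' + dist z' (c i) := dist_triangle _ _ _
    linarith
  have hFcont : Continuous F := by
    refine LipschitzWith.continuous (K := 1) (LipschitzWith.of_dist_le_mul fun z z' => ?_)
    rw [Real.dist_eq, NNReal.coe_one, one_mul, abs_le]
    constructor
    · have h := hFlip z' z
      rw [dist_comm] at h
      linarith
    · have h := hFlip z z'
      linarith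
  obtain ⟨i₀⟩ := ‹Nonempty (Fin n)›
  set R : ℝ := F (c i₀) + r i₀ + 1 with hRdef
  have hFci₀ : -r i₀ ≤ F (c i₀) := by
    have h := hleF (c i₀) i₀
    rw [dist_self] at h
    linarith
  have hR0 : 0 ≤ R := by simp only [hRdef]; linarith
  set K : Set (ℝ × ℝ) := Y ∩ Metric.closedBall (c i₀) R with hKdef
  have hKco : IsCompact K := (isCompact_closedBall _ _).inter_left hYc
  have hKne : K.Nonempty := ⟨c i₀, hcY i₀, Metric.mem_closedBall_self hR0⟩
  obtain ⟨z, hzK, hzmin⟩ := hKco.exists_isMinOn hKne hFcont.continuousOn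
  have hzY : z ∈ Y := hzK.1
  have hminY : ∀ y ∈ Y, F z ≤ F y := by
    intro y hy
    by_cases hyK : y ∈ Metric.closedBall (c i₀) R
    · exact hzmin ⟨hy, hyK⟩
    · have hd : R < dist y (c i₀) := by
        rw [Metric.mem_closedBall] at hyK
        push_neg at hyK
        exact hyK
      have h1 : dist y (c i₀) - r i₀ ≤ F y := hleF y i₀
      have h2 : F z ≤ F (c i₀) := hzmin ⟨hcY i₀, Metric.mem_closedBall_self hR0⟩
      simp only [hRdef] at hd
      linarith
  set m : ℝ := F z with hmdef
  by_cases hm : m ≤ 0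
  · exact ⟨z, hzY, fun i => by have := hleF z i; linarith⟩
  push_neg at hm
  exfalso
  have hdistz : ∀ i, dist z (c i) ≤ r i + m := fun i => by have := hleF z i; linarith
  have hminY' : ∀ y ∈ Y, ∃ i, r i + m ≤ dist y (c i) := by
    intro y hy
    have h1 := hminY y hy
    obtain ⟨i, hi⟩ := Finite.exists_max (fun i => dist y (c i) - r i)
    exact ⟨i, by have h2 : F y ≤ dist y (c i) - r i := hFle _ _ hi; linarith⟩
  obtain ⟨ia, hia⟩ := Finite.exists_max (fun i => dist z (c i) - r i)
  have hact_ia : dist z (c ia) = r ia + m := by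
    have h1 : F z ≤ dist z (c ia) - r ia := hFle _ _ hia
    have h2 := hdistz ia
    linarith
  -- direction predicates
  have habsx : ∀ i, dist z (c i) = r i + m → |z.1 - (c i).1| ≤ r i + m :=
    fun i hact => hact ▸ dist_fst_le z (c i)
  have habsy : ∀ i, dist z (c i) = r i + m → |z.2 - (c i).2| ≤ r i + m :=
    fun i hact => hact ▸ dist_snd_le z (c i)
  have hrm : ∀ i, (0:ℝ) < r i + m := fun i => by have := hr0 i; linarith
  have hdir : (∃ i, dist z (c i) = r i + m ∧ (c i).1 - z.1 = r i + m) ∨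
      (∃ i, dist z (c i) = r i + m ∧ z.1 - (c i).1 = r i + m) ∨
      (∃ i, dist z (c i) = r i + m ∧ (c i).2 - z.2 = r i + m) ∨
      (∃ i, dist z (c i) = r i + m ∧ z.2 - (c i).2 = r i + m) := by
    have hmax : max |z.1 - (c ia).1| |z.2 - (c ia).2| = r ia + m := by
      rw [← dist_xy]; exact hact_ia
    rcases max_cases |z.1 - (c ia).1| |z.2 - (c ia).2| with ⟨hc1, _⟩ | ⟨hc1, _⟩ <;>
      rw [hc1] at hmax
    · rcases (abs_eq (le_of_lt (hrm ia))).mp hmax with h | h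
      · exact Or.inr (Or.inl ⟨ia, hact_ia, h⟩)
      · exact Or.inl ⟨ia, hact_ia, by linarith⟩
    · rcases (abs_eq (le_of_lt (hrm ia))).mp hmax with h | h
      · exact Or.inr (Or.inr (Or.inr ⟨ia, hact_ia, h⟩))
      · exact Or.inr (Or.inr (Or.inl ⟨ia, hact_ia, by linarith⟩))
  have noEW : (∃ i, dist z (c i) = r i + m ∧ (c i).1 - z.1 = r i + m) →
      (∃ i, dist z (c i) = r i + m ∧ z.1 - (c i).1 = r i + m) → False := by
    rintro ⟨i, _, hiE⟩ ⟨j, _, hjW⟩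
    have h1 : (c i).1 - (c j).1 ≤ |(c i).1 - (c j).1| := le_abs_self _
    have h2 := dist_fst_le (c i) (c j)
    have h3 := hpair i j
    linarith
  have noNS : (∃ i, dist z (c i) = r i + m ∧ (c i).2 - z.2 = r i + m) →
      (∃ i, dist z (c i) = r i + m ∧ z.2 - (c i).2 = r i + m) → False := by
    rintro ⟨i, _, hiN⟩ ⟨j, _, hjS⟩
    have h1 : (c i).2 - (c j).2 ≤ |(c i).2 - (c j).2| := le_abs_self _
    have h2 := dist_snd_le (c i) (c j)
    have h3 := hpair i j
    linarith
  have strictE : ¬(∃ i, dist z (c i) = r i + m ∧ (c i).1 - z.1 = r i + m) →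
      ∀ i, dist z (c i) = r i + m → (c i).1 - z.1 < r i + m := by
    intro hno i hact
    have h := (abs_le.mp (habsx i hact)).1
    rcases lt_or_eq_of_le (by linarith : (c i).1 - z.1 ≤ r i + m) with h' | h'
    · exact h'
    · exact absurd ⟨i, hact, h'⟩ hno
  have strictW : ¬(∃ i, dist z (c i) = r i + m ∧ z.1 - (c i).1 = r i + m) →
      ∀ i, dist z (c i) = r i + m → z.1 - (c i).1 < r i + m := by
    intro hno i hact
    have h := (abs_le.mp (habsx i hact)).2
    rcases lt_or_eq_of_le h with h' | h'
    · exact h'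
    · exact absurd ⟨i, hact, h'⟩ hno
  have strictN : ¬(∃ i, dist z (c i) = r i + m ∧ (c i).2 - z.2 = r i + m) →
      ∀ i, dist z (c i) = r i + m → (c i).2 - z.2 < r i + m := by
    intro hno i hact
    have h := (abs_le.mp (habsy i hact)).1
    rcases lt_or_eq_of_le (by linarith : (c i).2 - z.2 ≤ r i + m) with h' | h'
    · exact h'
    · exact absurd ⟨i, hact, h'⟩ hno
  have strictS : ¬(∃ i, dist z (c i) = r i + m ∧ z.2 - (c i).2 = r i + m) →
      ∀ i, dist z (c i) = r i + m → z.2 - (c i).2 < r i + m := by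
    intro hno i hact
    have h := (abs_le.mp (habsy i hact)).2
    rcases lt_or_eq_of_le h with h' | h'
    · exact h'
    · exact absurd ⟨i, hact, h'⟩ hno
  -- isometries
  have hσA : ∀ p q : ℝ × ℝ, dist ((-p.1, p.2) : ℝ × ℝ) ((-q.1, q.2) : ℝ × ℝ) = dist p q := by
    intro p q
    rw [dist_xy, dist_xy]
    simp only
    rw [show -p.1 - -q.1 = -(p.1 - q.1) from by ring, abs_neg]
  have hσB : ∀ p q : ℝ × ℝ, dist ((p.1, -p.2) : ℝ × ℝ) ((q.1, -q.2) : ℝ × ℝ) = dist p q := by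
    intro p q
    rw [dist_xy, dist_xy]
    simp only
    rw [show -p.2 - -q.2 = -(p.2 - q.2) from by ring, abs_neg]
  have hσC : ∀ p q : ℝ × ℝ, dist ((p.2, p.1) : ℝ × ℝ) ((q.2, q.1) : ℝ × ℝ) = dist p q := by
    intro p q
    rw [dist_xy, dist_xy]
    simp only
    rw [max_comm]
  have hσD : ∀ p q : ℝ × ℝ, dist ((-p.2, p.1) : ℝ × ℝ) ((-q.2, q.1) : ℝ × ℝ) = dist p q := by
    intro p q
    rw [dist_xy, dist_xy]
    simp only
    rw [show -p.2 - -q.2 = -(p.2 - q.2) from by ring, abs_neg, max_comm]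
  have hσE : ∀ p q : ℝ × ℝ, dist ((-p.1, -p.2) : ℝ × ℝ) ((-q.1, -q.2) : ℝ × ℝ) = dist p q := by
    intro p q
    rw [dist_xy, dist_xy]
    simp only
    rw [show -p.1 - -q.1 = -(p.1 - q.1) from by ring, show -p.2 - -q.2 = -(p.2 - q.2) from by ring,
      abs_neg, abs_neg]
  by_cases hE : ∃ i, dist z (c i) = r i + m ∧ (c i).1 - z.1 = r i + m
  · by_cases hS : ∃ i, dist z (c i) = r i + m ∧ z.2 - (c i).2 = r i + m
    · -- flipY
      have hnN : ¬(∃ i, dist z (c i) = r i + m ∧ (c i).2 - z.2 = r i + m) :=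
        fun hN => noNS hN hS
      have hnW : ¬(∃ i, dist z (c i) = r i + m ∧ z.1 - (c i).1 = r i + m) :=
        fun hW => noEW hE hW
      refine helly_transport hYg c r hcY z hzY m hm hr0 hdistz hminY'
        (fun p => (p.1, -p.2)) hσB ?_ ?_ ?_
      · obtain ⟨i, h1, h2⟩ := hE
        exact ⟨i, h1, h2⟩
      · intro i hact
        exact strictW hnW i hact
      · intro i hact
        have := strictN hnN i hact
        simp only
        linarith
    · have hnW : ¬(∃ i, dist z (c i) = r i + m ∧ z.1 - (c i).1 = r i + m) :=
        fun hW => noEW hE hW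
      refine helly_transport hYg c r hcY z hzY m hm hr0 hdistz hminY'
        (fun p => p) (fun p q => rfl) hE (strictW hnW) (strictS hS)
  · by_cases hW : ∃ i, dist z (c i) = r i + m ∧ z.1 - (c i).1 = r i + m
    · by_cases hS : ∃ i, dist z (c i) = r i + m ∧ z.2 - (c i).2 = r i + m
      · -- flipX ∘ flipY
        have hnN : ¬(∃ i, dist z (c i) = r i + m ∧ (c i).2 - z.2 = r i + m) :=
          fun hN => noNS hN hS
        refine helly_transport hYg c r hcY z hzY m hm hr0 hdistz hminY'
          (fun p => (-p.1, -p.2)) hσE ?_ ?_ ?_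
        · obtain ⟨i, h1, h2⟩ := hW
          exact ⟨i, h1, by simp only; linarith⟩
        · intro i hact
          have := strictE hE i hact
          simp only
          linarith
        · intro i hact
          have := strictN hnN i hact
          simp only
          linarith
      · -- flipX
        refine helly_transport hYg c r hcY z hzY m hm hr0 hdistz hminY'
          (fun p => (-p.1, p.2)) hσA ?_ ?_ ?_
        · obtain ⟨i, h1, h2⟩ := hW
          exact ⟨i, h1, by simp only; linarith⟩
        · intro i hact
          have := strictE hE i hact
          simp only
          linarith
        · intro i hact
          exact strictS hS i hact
    · by_cases hN : ∃ i, dist z (c i) = r i + m ∧ (c i).2 - z.2 = r i + m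
      · -- swap
        have hnS : ¬(∃ i, dist z (c i) = r i + m ∧ z.2 - (c i).2 = r i + m) :=
          fun hS => noNS hN hS
        refine helly_transport hYg c r hcY z hzY m hm hr0 hdistz hminY'
          (fun p => (p.2, p.1)) hσC ?_ ?_ ?_
        · obtain ⟨i, h1, h2⟩ := hN
          exact ⟨i, h1, h2⟩
        · intro i hact
          exact strictS hnS i hact
        · intro i hact
          exact strictW hW i hact
      · -- must be S; use (-p.2, p.1)
        have hS : ∃ i, dist z (c i) = r i + m ∧ z.2 - (c i).2 = r i + m := by
          rcases hdir with h | h | h | h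
          · exact absurd h hE
          · exact absurd h hW
          · exact absurd h hN
          · exact h
        refine helly_transport hYg c r hcY z hzY m hm hr0 hdistz hminY'
          (fun p => (-p.2, p.1)) hσD ?_ ?_ ?_
        · obtain ⟨i, h1, h2⟩ := hS
          exact ⟨i, h1, by simp only; linarith⟩
        · intro i hact
          have := strictN hN i hact
          simp only
          linarith
        · intro i hact
          exact strictW hW i hact

lemma helly_Y {Y : Set (ℝ × ℝ)} (hYg : GeodConvex Y) (hYc : IsClosed Y) (hYne : Y.Nonempty)
    (ι : Type) (cc : ι → ℝ × ℝ) (rr : ι → ℝ) (hcY : ∀ i, cc i ∈ Y)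
    (hpair : ∀ i j, dist (cc i) (cc j) ≤ rr i + rr j) :
    ∃ z ∈ Y, ∀ i, dist z (cc i) ≤ rr i := by
  classical
  rcases isEmpty_or_nonempty ι with hι | hι
  · exact ⟨hYne.choose, hYne.choose_spec, fun i => isEmptyElim i⟩
  obtain ⟨i₀⟩ := hι
  set K : ι → Set (ℝ × ℝ) := fun i => Y ∩ Metric.closedBall (cc i) (rr i) with hKdef
  have hKco : IsCompact (K i₀) := (isCompact_closedBall _ _).inter_left hYc
  have hKcl : ∀ i, IsClosed (K i) := fun i => hYc.inter Metric.isClosed_closedBall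
  by_contra hno
  push_neg at hno
  have hempty : K i₀ ∩ ⋂ i, K i = ∅ := by
    rw [Set.eq_empty_iff_forall_notMem]
    intro z hz
    have hzY : z ∈ Y := hz.1.1
    obtain ⟨i, hi⟩ := hno z hzY
    have hzi : z ∈ K i := Set.mem_iInter.mp hz.2 i
    rw [hKdef] at hzi
    have := hzi.2
    rw [Metric.mem_closedBall] at this
    exact absurd this (not_le.mpr hi)
  obtain ⟨u, hu⟩ := hKco.elim_finite_subfamily_closed K hKcl hempty
  set u' : Finset ι := insert i₀ u with hu'def
  set e := u'.equivFin with hedef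
  obtain ⟨z, hzY, hz⟩ := helly_finite hYg hYc hYne (fun k => cc (e.symm k)) (fun k => rr (e.symm k))
    (fun k => hcY _) (fun k l => hpair _ _)
  have hzK : ∀ i ∈ u', z ∈ K i := by
    intro i hi
    have := hz (e ⟨i, hi⟩)
    rw [Equiv.symm_apply_apply] at this
    exact ⟨hzY, Metric.mem_closedBall.mpr this⟩
  have hz1 : z ∈ K i₀ := hzK i₀ (Finset.mem_insert_self _ _)
  have hz2 : z ∈ ⋂ i ∈ u, K i :=
    Set.mem_iInter₂.mpr fun i hi => hzK i (Finset.mem_insert_of_mem hi)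
  rw [Set.eq_empty_iff_forall_notMem] at hu
  exact hu z ⟨hz1, hz2⟩

end Plane

end TSP

open TSP

/-- Let `X` be a nonempty subset of the `l∞` plane and `Y ⊆ ℝ²_∞` closed,
geodesically convex, containing `X` and minimal with these properties. Then `Y`
with the induced metric is isometric to the tight span `T(X)` of `X`, the
latter carrying the supremum metric. -/
theorem minimal_closed_geodConvex_isometric_tightSpan
    (X Y : Set (ℝ × ℝ)) (hX : X.Nonempty)
    (hYc : IsClosed Y) (hYg : GeodConvex Y) (hXY : X ⊆ Y)
    (hmin : ∀ Y' : Set (ℝ × ℝ), Y' ⊆ Y → IsClosed Y' → GeodConvex Y' → X ⊆ Y' → Y' = Y) :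
    ∃ Φ : ↥Y → ↥(TightSpanSet X), Function.Bijective Φ ∧
      ∀ a b : ↥Y, (⨆ x : X, |(Φ a).1 x - (Φ b).1 x|) = dist a b := by
  classical
  haveI : Nonempty ↥X := hX.to_subtype
  have hYne : Y.Nonempty := ⟨hX.choose, hXY hX.choose_spec⟩
  -- the canonical embedding of X into the tight span
  set ee : ↥X → ↥(TightSpanSet X) := fun x => ⟨eX x, eX_mem x⟩ with heedef
  set φ₀ : ↥(TightSpanSet X) → ℝ × ℝ :=
    fun g => if h : ∃ x : ↥X, ee x = g then ((h.choose : ↥X) : ℝ × ℝ) else hX.choose with hφ₀def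
  have hφ₀val : ∀ x : ↥X, φ₀ (ee x) = (x : ℝ × ℝ) := by
    intro x
    have hex : ∃ x' : ↥X, ee x' = ee x := ⟨x, rfl⟩
    simp only [hφ₀def, dif_pos hex]
    have h1 : ee hex.choose = ee x := hex.choose_spec
    have h2 : eX (X := X) hex.choose = eX x := by
      have := Subtype.ext_iff.mp h1
      exact this
    have h3 : dist (hex.choose : ℝ × ℝ) (x : ℝ × ℝ) = 0 := by
      have h4 := congrFun h2 x
      simp only [eX, dist_self] at h4
      exact h4
    exact dist_eq_zero.mp h3
  have hφ₀T : ∀ a ∈ Set.range ee, φ₀ a ∈ Y := by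
    rintro _ ⟨x, rfl⟩
    rw [hφ₀val]
    exact hXY x.2
  have hφ₀ne : ∀ a ∈ Set.range ee, ∀ b ∈ Set.range ee,
      dist (φ₀ a) (φ₀ b) ≤ dT a.1 b.1 := by
    rintro _ ⟨x, rfl⟩ _ ⟨y, rfl⟩
    rw [hφ₀val, hφ₀val]
    exact le_of_eq (dT_eX_eX x y).symm
  obtain ⟨η, hηY, hηne, hηA⟩ := extend_nonexpansive
    (M := ↥(TightSpanSet X)) (W := ℝ × ℝ)
    (fun f g => dT f.1 g.1) (fun p q : ℝ × ℝ => dist p q) Y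
    (fun f => dT_self f.1)
    (fun f g => dT_comm f.1 g.1)
    (fun f g h => dT_triangle f.2 g.2 h.2)
    (fun w _ => le_of_eq (dist_self w))
    (fun w w' => dist_comm w w')
    (fun w _ w' _ h => dist_le_zero.mp h)
    (fun ι cc rr hcc hpw => helly_Y hYg hYc hYne ι cc rr hcc hpw)
    (Set.range ee) φ₀ hφ₀T hφ₀ne
  have hηx : ∀ x : ↥X, η (ee x) = (x : ℝ × ℝ) :=
    fun x => (hηA _ ⟨x, rfl⟩).trans (hφ₀val x)
  have hηreal : ∀ (f : ↥(TightSpanSet X)) (x : ↥X), dist (η f) (x : ℝ × ℝ) = f.1 x := by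
    intro f x
    have hle : ∀ y : ↥X, dist (η f) (y : ℝ × ℝ) ≤ f.1 y := by
      intro y
      have h := hηne f (ee y)
      rw [hηx y] at h
      calc dist (η f) (y : ℝ × ℝ) ≤ dT f.1 (ee y).1 := h
        _ = f.1 y := dT_eX f.2 y
    have htri : ∀ y z : ↥X, dist (y : ℝ × ℝ) (z : ℝ × ℝ) ≤
        dist (η f) (y : ℝ × ℝ) + dist (η f) (z : ℝ × ℝ) :=
      fun y z => dist_triangle_left _ _ _
    exact le_antisymm (hle x) (ts_min f.2 htri hle x)
  have hηiso : ∀ f g : ↥(TightSpanSet X), dist (η f) (η g) = dT f.1 g.1 := by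
    intro f g
    refine le_antisymm (hηne f g) (dT_le fun x => ?_)
    rw [← hηreal f x, ← hηreal g x]
    exact abs_dist_sub_le _ _ _
  set S : Set (ℝ × ℝ) := Set.range η with hSdef
  have hSY : S ⊆ Y := by
    rintro _ ⟨f, rfl⟩
    exact hηY f
  have hXS : X ⊆ S := fun x hx => ⟨ee ⟨x, hx⟩, hηx ⟨x, hx⟩⟩
  have hSclosed : IsClosed S := by
    refine isClosed_of_closure_subset fun p hp => ?_
    have hfpTS : (fun x : ↥X => dist p (x : ℝ × ℝ)) ∈ TightSpanSet X := by
      refine ts_approx fun ε hε => ?_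
      obtain ⟨q, hqS, hpq⟩ := Metric.mem_closure_iff.mp hp ε hε
      obtain ⟨g, rfl⟩ := hqS
      refine ⟨g.1, g.2, fun x => ?_⟩
      rw [← hηreal g x]
      calc |dist p (x : ℝ × ℝ) - dist (η g) (x : ℝ × ℝ)| ≤ dist p (η g) :=
          abs_dist_sub_le _ _ _
        _ ≤ ε := le_of_lt hpq
    have key : ∀ ε : ℝ, 0 < ε → dist p (η ⟨_, hfpTS⟩) ≤ 0 + 2*ε := by
      intro ε hε
      obtain ⟨q, hqS, hpq⟩ := Metric.mem_closure_iff.mp hp ε hε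
      obtain ⟨g, rfl⟩ := hqS
      have h2 : dT g.1 (fun x : ↥X => dist p (x : ℝ × ℝ)) ≤ dist p (η g) := by
        refine dT_le fun x => ?_
        rw [← hηreal g x, dist_comm p (η g)]
        exact abs_dist_sub_le _ _ _
      have h3 : dist (η g) (η ⟨_, hfpTS⟩) ≤ dT g.1 (fun x : ↥X => dist p (x : ℝ × ℝ)) :=
        hηne _ _
      have h4 : dist p (η ⟨_, hfpTS⟩) ≤ dist p (η g) + dist (η g) (η ⟨_, hfpTS⟩) :=
        dist_triangle _ _ _
      linarith
    have hd0 : dist p (η ⟨_, hfpTS⟩) ≤ 0 := by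
      refine le_of_forall_pos_le_add fun ε hε => ?_
      have := key (ε/2) (by linarith)
      linarith
    exact ⟨⟨_, hfpTS⟩, (dist_le_zero.mp hd0).symm⟩
  have hSgeod : GeodConvex S := by
    rintro _ ⟨f, rfl⟩ _ ⟨g, rfl⟩
    set D : ℝ := dist (η f) (η g) with hDdef
    have hDd : D = dT f.1 g.1 := hηiso f g
    have hD0 : 0 ≤ D := dist_nonneg
    set FD : ℝ → (↥X → ℝ) := fun t => if t = 0 then f.1 else g.1 with hFDdef
    have hFD0 : FD 0 = f.1 := by simp only [hFDdef, if_pos rfl]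
    have hFDD : FD D = g.1 := by
      by_cases hD0' : D = 0
      · have hdz : dT f.1 g.1 = 0 := by rw [← hDd, hD0']
        have hfg : f.1 = g.1 := dT_eq_zero f.2 g.2 (le_of_eq hdz)
        rw [hD0', hFD0]
        exact hfg
      · simp only [hFDdef, if_neg hD0']
    have hFDT : ∀ a ∈ ({0, D} : Set ℝ), FD a ∈ TightSpanSet X := by
      intro a _
      by_cases h0 : a = 0
      · rw [hFDdef]; simp only [if_pos h0]; exact f.2
      · rw [hFDdef]; simp only [if_neg h0]; exact g.2
    have hFDne : ∀ a ∈ ({0, D} : Set ℝ), ∀ b ∈ ({0, D} : Set ℝ),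
        dT (FD a) (FD b) ≤ |a - b| := by
      intro a ha b hb
      rcases Set.mem_insert_iff.mp ha with rfl | ha <;>
        rcases Set.mem_insert_iff.mp hb with rfl | hb
      · rw [hFD0, dT_self, sub_self, abs_zero]
      · have hbD : b = D := hb
        rw [hbD, hFD0, hFDD, zero_sub, abs_neg, abs_of_nonneg hD0]
        exact le_of_eq hDd.symm
      · have haD : a = D := ha
        rw [haD, hFD0, hFDD, abs_sub_comm, zero_sub, abs_neg, abs_of_nonneg hD0]
        rw [dT_comm]
        exact le_of_eq hDd.symm
      · have haD : a = D := ha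
        have hbD : b = D := hb
        rw [haD, hbD, hFDD, dT_self, sub_self, abs_zero]
    obtain ⟨lam, hlamT, hlamne, hlamA⟩ := extend_nonexpansive
      (M := ℝ) (W := ↥X → ℝ)
      (fun s t => |s - t|) dT (TightSpanSet X)
      (fun a => by simp)
      (fun a b => abs_sub_comm a b)
      (fun a b c => abs_sub_le a b c)
      (fun w hw => le_of_eq (dT_self w))
      (fun w w' => dT_comm w w')
      (fun w hw w' hw' h => dT_eq_zero hw hw' h)
      (fun ι cc rr hcc hpw => ts_hyperconvex ι cc hcc rr hpw)
      ({0, D}) FD hFDT hFDne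
    have hlam0 : lam 0 = f.1 := by
      rw [hlamA 0 (Set.mem_insert _ _), hFD0]
    have hlamD : lam D = g.1 := by
      rw [hlamA D (Set.mem_insert_of_mem _ rfl), hFDD]
    set γ : ℝ → ℝ × ℝ := fun t => η ⟨lam t, hlamT t⟩ with hγdef
    have hγ0 : γ 0 = η f := by
      show η _ = η f
      congr 1
      exact Subtype.ext hlam0
    have hγD : γ D = η g := by
      show η _ = η g
      congr 1
      exact Subtype.ext hlamD
    have hγle : ∀ s t : ℝ, dist (γ s) (γ t) ≤ |s - t| := by
      intro s t
      have h1 : dist (γ s) (γ t) = dT (lam s) (lam t) := hηiso _ _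
      rw [h1]
      exact hlamne s t
    have hiso : ∀ s ∈ Set.Icc (0:ℝ) D, ∀ t ∈ Set.Icc (0:ℝ) D,
        dist (γ s) (γ t) = |s - t| := by
      have hkey : ∀ s t : ℝ, s ∈ Set.Icc (0:ℝ) D → t ∈ Set.Icc (0:ℝ) D → s ≤ t →
          dist (γ s) (γ t) = t - s := by
        intro s t hs ht hst
        have h1 : dist (η f) (γ s) ≤ s := by
          rw [← hγ0]
          calc dist (γ 0) (γ s) ≤ |0 - s| := hγle 0 s
            _ = s := by rw [zero_sub, abs_neg, abs_of_nonneg hs.1]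
        have h2 : dist (γ t) (η g) ≤ D - t := by
          rw [← hγD]
          calc dist (γ t) (γ D) ≤ |t - D| := hγle t D
            _ = D - t := by rw [abs_sub_comm, abs_of_nonneg (by linarith [ht.2])]
        have h3 : dist (γ s) (γ t) ≤ t - s := by
          have := hγle s t
          rw [abs_sub_comm, abs_of_nonneg (by linarith)] at this
          exact this
        have h4 : D ≤ dist (η f) (γ s) + dist (γ s) (γ t) + dist (γ t) (η g) := by
          calc D = dist (η f) (η g) := hDdef
            _ ≤ dist (η f) (γ t) + dist (γ t) (η g) := dist_triangle _ _ _
            _ ≤ (dist (η f) (γ s) + dist (γ s) (γ t)) + dist (γ t) (η g) := by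
                have := dist_triangle (η f) (γ s) (γ t)
                linarith
        linarith
      intro s hs t ht
      rcases le_total s t with hst | hst
      · rw [hkey s t hs ht hst, abs_sub_comm, abs_of_nonneg (by linarith)]
      · rw [dist_comm, hkey t s ht hs hst, abs_of_nonneg (by linarith)]
    refine ⟨γ, ⟨hγ0, ?_, ?_⟩, ?_⟩
    · exact hDdef ▸ hγD
    · exact hDdef ▸ hiso
    · intro t _
      exact ⟨⟨lam t, hlamT t⟩, rfl⟩
  have hYS : S = Y := hmin S hSY hSclosed hSgeod hXS
  have hmem : ∀ p : ℝ × ℝ, p ∈ Y → (fun x : ↥X => dist p (x : ℝ × ℝ)) ∈ TightSpanSet X := by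
    intro p hp
    rw [← hYS] at hp
    obtain ⟨f, rfl⟩ := hp
    have h : (fun x : ↥X => dist (η f) (x : ℝ × ℝ)) = f.1 := funext (hηreal f)
    rw [h]
    exact f.2
  set Φ : ↥Y → ↥(TightSpanSet X) :=
    fun p => ⟨fun x => dist (p : ℝ × ℝ) (x : ℝ × ℝ), hmem p.1 p.2⟩ with hΦdef
  have hrep : ∀ p : ↥Y, ∃ f : ↥(TightSpanSet X), η f = (p : ℝ × ℝ) := by
    intro p
    have hp : (p : ℝ × ℝ) ∈ S := hYS ▸ p.2
    exact hp
  have hΦval : ∀ (p : ↥Y) (f : ↥(TightSpanSet X)), η f = (p : ℝ × ℝ) → (Φ p).1 = f.1 := by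
    intro p f hf
    funext x
    show dist (p : ℝ × ℝ) (x : ℝ × ℝ) = f.1 x
    rw [← hf]
    exact hηreal f x
  have hdistform : ∀ a b : ↥Y, (⨆ x : X, |(Φ a).1 x - (Φ b).1 x|) = dist a b := by
    intro a b
    obtain ⟨fa, hfa⟩ := hrep a
    obtain ⟨fb, hfb⟩ := hrep b
    have h1 : (⨆ x : X, |(Φ a).1 x - (Φ b).1 x|) = dT (Φ a).1 (Φ b).1 := rfl
    rw [h1, hΦval a fa hfa, hΦval b fb hfb, ← hηiso fa fb, hfa, hfb, Subtype.dist_eq]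
  refine ⟨Φ, ⟨?_, ?_⟩, hdistform⟩
  · intro a b hab
    have h1 := hdistform a b
    rw [hab] at h1
    have h2 : (⨆ x : X, |(Φ b).1 x - (Φ b).1 x|) = 0 := by
      simp only [sub_self, abs_zero]
      exact ciSup_const
    rw [h2] at h1
    exact dist_le_zero.mp (le_of_eq h1.symm) |>.symm ▸ rfl
  · rintro ⟨f, hf⟩
    have hpY : η ⟨f, hf⟩ ∈ Y := hηY _
    refine ⟨⟨η ⟨f, hf⟩, hpY⟩, ?_⟩
    apply Subtype.ext
    funext x
    show dist (η ⟨f, hf⟩) (x : ℝ × ℝ) = f x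
    exact hηreal ⟨f, hf⟩ x
end

section
/- Every nonempty closed and geodesically convex subset of the l∞ plane ℝ²_∞, with the induced metric, is hyperconvex. -/
/-- A metric space is hyperconvex if every family of closed balls whose radii
satisfy the pairwise condition `dist (x i) (x j) ≤ r i + r j` has nonempty
intersection. -/
def Hyperconvex (X : Type*) [MetricSpace X] : Prop :=
  ∀ (ι : Type) (x : ι → X) (r : ι → ℝ),
    (∀ i, 0 ≤ r i) → (∀ i j, dist (x i) (x j) ≤ r i + r j) →
    (⋂ i, {y : X | dist (x i) y ≤ r i}).Nonempty

open Set

lemma ldist (p q : ℝ × ℝ) : dist p q = max |p.1 - q.1| |p.2 - q.2| := by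
  rw [Prod.dist_eq, Real.dist_eq, Real.dist_eq]

lemma two_dist (p q : ℝ × ℝ) :
    |(p.1 + p.2) - (q.1 + q.2)| + |(p.1 - p.2) - (q.1 - q.2)| = 2 * dist p q := by
  rw [ldist]
  rcases abs_cases (p.1 - q.1) with ⟨h1, h1'⟩ | ⟨h1, h1'⟩ <;>
    rcases abs_cases (p.2 - q.2) with ⟨h2, h2'⟩ | ⟨h2, h2'⟩ <;>
    rcases abs_cases ((p.1 + p.2) - (q.1 + q.2)) with ⟨h3, h3'⟩ | ⟨h3, h3'⟩ <;>
    rcases abs_cases ((p.1 - p.2) - (q.1 - q.2)) with ⟨h4, h4'⟩ | ⟨h4, h4'⟩ <;>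
    rcases max_cases |p.1 - q.1| |p.2 - q.2| with ⟨h5, h5'⟩ | ⟨h5, h5'⟩ <;>
    linarith

lemma abs_between {a b c : ℝ} (h : |a - b| + |b - c| = |a - c|) :
    min a c ≤ b ∧ b ≤ max a c := by
  constructor
  · by_contra hb
    push_neg at hb
    rcases abs_cases (a - c) with ⟨h3, _⟩ | ⟨h3, _⟩ <;>
    · have hba : b < a := lt_of_lt_of_le hb (min_le_left a c)
      have hbc : b < c := lt_of_lt_of_le hb (min_le_right a c)
      rw [abs_of_pos (by linarith), abs_of_neg (by linarith)] at h
      linarith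
  · by_contra hb
    push_neg at hb
    rcases abs_cases (a - c) with ⟨h3, _⟩ | ⟨h3, _⟩ <;>
    · have hba : a < b := lt_of_le_of_lt (le_max_left a c) hb
      have hbc : c < b := lt_of_le_of_lt (le_max_right a c) hb
      rw [abs_of_neg (by linarith), abs_of_pos (by linarith)] at h
      linarith

lemma btw_u {P Q R : ℝ × ℝ} (h : dist P Q + dist Q R = dist P R) :
    min (P.1 + P.2) (R.1 + R.2) ≤ Q.1 + Q.2 ∧ Q.1 + Q.2 ≤ max (P.1 + P.2) (R.1 + R.2) := by
  have e1 := two_dist P Q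
  have e2 := two_dist Q R
  have e3 := two_dist P R
  have t1 : |(P.1 + P.2) - (R.1 + R.2)| ≤
      |(P.1 + P.2) - (Q.1 + Q.2)| + |(Q.1 + Q.2) - (R.1 + R.2)| := abs_sub_le _ _ _
  have t2 : |(P.1 - P.2) - (R.1 - R.2)| ≤
      |(P.1 - P.2) - (Q.1 - Q.2)| + |(Q.1 - Q.2) - (R.1 - R.2)| := abs_sub_le _ _ _
  have key : |(P.1 + P.2) - (Q.1 + Q.2)| + |(Q.1 + Q.2) - (R.1 + R.2)|
      = |(P.1 + P.2) - (R.1 + R.2)| := by linarith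
  exact abs_between key

lemma geo_cont {p q : ℝ × ℝ} {γ : ℝ → ℝ × ℝ} (hgeo : IsGeodesic p q γ) :
    ContinuousOn γ (Icc 0 (dist p q)) := by
  have : LipschitzOnWith 1 γ (Icc 0 (dist p q)) := by
    rw [lipschitzOnWith_iff_dist_le_mul]
    intro s hs t ht
    rw [hgeo.2.2 s hs t ht, Real.dist_eq]
    simp
  exact this.continuousOn

lemma side (A : Set (ℝ × ℝ)) (hgc : GeodConvex A)
    (a₁ b₁ a₂ b₂ rE rS : ℝ) (cE cS : ℝ × ℝ)
    (h1 : a₁ ≤ b₁) (h2 : a₂ ≤ b₂) (hrE : 0 ≤ rE) (hrS : 0 ≤ rS)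
    (hEmem : cE ∈ A) (hSmem : cS ∈ A)
    (hE1 : cE.1 = a₁ + rE) (hE2 : b₁ ≤ cE.1 + rE) (hE3 : cE.2 - rE ≤ a₂) (hE4 : b₂ ≤ cE.2 + rE)
    (hS1 : cS.2 = b₂ - rS) (hS2 : cS.1 - rS ≤ a₁) (hS3 : b₁ ≤ cS.1 + rS)
    (havoid : ∀ z ∈ A, a₁ + a₂ ≤ z.1 + z.2 → z.1 + z.2 ≤ b₁ + b₂ → z.1 < a₁ ∨ b₂ < z.2) :
    False := by
  obtain ⟨γ, hgeo, himg⟩ := hgc cE hEmem cS hSmem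
  set D := dist cE cS with hDdef
  have hD0 : 0 ≤ D := dist_nonneg
  have hγ0 : γ 0 = cE := hgeo.1
  have hγD : γ D = cS := hgeo.2.1
  have hiso := hgeo.2.2
  have h0Icc : (0:ℝ) ∈ Icc (0:ℝ) D := ⟨le_refl 0, hD0⟩
  have hDIcc : D ∈ Icc (0:ℝ) D := ⟨hD0, le_refl D⟩
  have hdl : ∀ t ∈ Icc (0:ℝ) D, dist cE (γ t) = t := by
    intro t ht
    have := hiso 0 h0Icc t ht
    rw [hγ0] at this
    rw [this, zero_sub, abs_neg, abs_of_nonneg ht.1]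
  have hdr : ∀ t ∈ Icc (0:ℝ) D, dist (γ t) cS = D - t := by
    intro t ht
    have := hiso t ht D hDIcc
    rw [hγD] at this
    rw [this, abs_of_nonpos (by linarith [ht.2])]
    ring
  have hadd : ∀ t ∈ Icc (0:ℝ) D, dist cE (γ t) + dist (γ t) cS = D := by
    intro t ht
    rw [hdl t ht, hdr t ht]
    ring
  -- D ≤ rE + rS via corner (b₁, b₂)
  have hK1 : dist cE ((b₁, b₂) : ℝ × ℝ) ≤ rE := by
    rw [ldist]
    apply max_le
    · rw [abs_le]; constructor <;> simp only <;> linarith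
    · rw [abs_le]; constructor <;> simp only <;> linarith
  have hK2 : dist ((b₁, b₂) : ℝ × ℝ) cS ≤ rS := by
    rw [ldist]
    apply max_le
    · rw [abs_le]; constructor <;> simp only <;> linarith
    · rw [abs_le]; constructor <;> simp only <;> linarith
  have hDle : D ≤ rE + rS := by
    have := dist_triangle cE ((b₁, b₂) : ℝ × ℝ) cS
    rw [← hDdef] at this
    linarith
  -- continuity
  have hcont : ContinuousOn γ (Icc 0 D) := geo_cont hgeo
  have hcy : ContinuousOn (fun t => (γ t).2) (Icc 0 D) := continuous_snd.comp_continuousOn hcont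
  have hcu : ContinuousOn (fun t => (γ t).1 + (γ t).2) (Icc 0 D) :=
    (continuous_fst.comp_continuousOn hcont).add hcy
  have huS : cS.1 + cS.2 ≤ b₁ + b₂ := by linarith
  have huE : a₁ + a₂ ≤ cE.1 + cE.2 := by linarith
  -- main claim: a point z on the geodesic with z.1 < a₁ and b₂ ≤ z.2
  have main : ∃ z : ℝ × ℝ, z.1 < a₁ ∧ b₂ ≤ z.2 ∧ dist cE z + dist z cS = D := by
    have step : ∀ t₀ ∈ Icc (0:ℝ) D, b₂ < (γ t₀).2 → (γ t₀).1 + (γ t₀).2 ≤ b₁ + b₂ →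
        ∃ z : ℝ × ℝ, z.1 < a₁ ∧ b₂ ≤ z.2 ∧ dist cE z + dist z cS = D := by
      intro t₀ ht₀ hy₀ hu₀
      have huAll : ∀ t ∈ Icc (0:ℝ) D, t₀ ≤ t → (γ t).1 + (γ t).2 ≤ b₁ + b₂ := by
        intro t ht htt
        have hsplit : dist (γ t₀) (γ t) + dist (γ t) cS = dist (γ t₀) cS := by
          rw [hiso t₀ ht₀ t ht, hdr t ht, hdr t₀ ht₀, abs_of_nonpos (by linarith)]
          ring
        have := (btw_u hsplit).2
        exact le_trans this (max_le hu₀ huS)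
      set S := {t | t ∈ Icc t₀ D ∧ b₂ ≤ (γ t).2} with hSdef
      have hSne : t₀ ∈ S := ⟨⟨le_refl t₀, ht₀.2⟩, le_of_lt hy₀⟩
      have hSbdd : BddAbove S := ⟨D, fun t ht => ht.1.2⟩
      set t₁ := sSup S with ht₁def
      have ht₁0 : t₀ ≤ t₁ := le_csSup hSbdd hSne
      have ht₁D : t₁ ≤ D := csSup_le ⟨t₀, hSne⟩ (fun t ht => ht.1.2)
      have ht₁Icc : t₁ ∈ Icc (0:ℝ) D := ⟨le_trans ht₀.1 ht₁0, ht₁D⟩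
      have hy₁ge : b₂ ≤ (γ t₁).2 := by
        by_contra hlt
        push_neg at hlt
        have hcyt := hcy t₁ ht₁Icc
        rw [Metric.continuousWithinAt_iff] at hcyt
        obtain ⟨δ, hδ0, hδ⟩ := hcyt (b₂ - (γ t₁).2) (by linarith)
        obtain ⟨s, hsS, hs⟩ := exists_lt_of_lt_csSup ⟨t₀, hSne⟩
          (show t₁ - δ < sSup S by rw [← ht₁def]; linarith)
        have hsle : s ≤ t₁ := le_csSup hSbdd hsS
        have hsIcc : s ∈ Icc (0:ℝ) D := ⟨le_trans ht₀.1 hsS.1.1, hsS.1.2⟩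
        have hsd : dist s t₁ < δ := by
          rw [Real.dist_eq, abs_of_nonpos (by linarith)]
          linarith
        have h5 := hδ hsIcc hsd
        rw [Real.dist_eq] at h5
        have h6 := le_abs_self ((γ s).2 - (γ t₁).2)
        have h7 := hsS.2
        linarith
      have hy₁le : (γ t₁).2 ≤ b₂ := by
        rcases eq_or_lt_of_le ht₁D with heq | hltD
        · rw [heq, hγD, hS1]; linarith
        · by_contra hgt
          push_neg at hgt
          have hcyt := hcy t₁ ht₁Icc
          rw [Metric.continuousWithinAt_iff] at hcyt
          obtain ⟨δ, hδ0, hδ⟩ := hcyt ((γ t₁).2 - b₂) (by linarith)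
          set s := min D (t₁ + δ/2) with hsdef
          have hs1 : t₁ < s := lt_min hltD (by linarith)
          have hsIcc : s ∈ Icc (0:ℝ) D := ⟨le_trans ht₁Icc.1 hs1.le, min_le_left _ _⟩
          have hsd : dist s t₁ < δ := by
            rw [Real.dist_eq, abs_of_nonneg (by linarith : (0:ℝ) ≤ s - t₁)]
            have : s ≤ t₁ + δ/2 := min_le_right _ _
            linarith
          have h5 := hδ hsIcc hsd
          rw [Real.dist_eq] at h5
          have h6 := neg_abs_le ((γ s).2 - (γ t₁).2)
          have hys : b₂ ≤ (γ s).2 := by linarith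
          have : s ∈ S := ⟨⟨le_trans ht₁0 hs1.le, hsIcc.2⟩, hys⟩
          have := le_csSup hSbdd this
          linarith
      have hy₁ : (γ t₁).2 = b₂ := le_antisymm hy₁le hy₁ge
      have hu₁ : (γ t₁).1 + (γ t₁).2 ≤ b₁ + b₂ := huAll t₁ ht₁Icc ht₁0
      have hx₁ : (γ t₁).1 < a₁ := by
        by_cases hlow : a₁ + a₂ ≤ (γ t₁).1 + (γ t₁).2
        · rcases havoid (γ t₁) (himg t₁ ht₁Icc) hlow hu₁ with h | h
          · exact h
          · rw [hy₁] at h; linarith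
        · push_neg at hlow
          rw [hy₁] at hlow
          linarith
      exact ⟨γ t₁, hx₁, hy₁.ge, hadd t₁ ht₁Icc⟩
    by_cases hu : cE.1 + cE.2 ≤ b₁ + b₂
    · have hyE : b₂ < cE.2 := by
        rcases havoid cE hEmem huE hu with h | h
        · exfalso; rw [hE1] at h; linarith
        · exact h
      refine step 0 h0Icc ?_ ?_ <;> rw [hγ0]
      · exact hyE
      · exact hu
    · push_neg at hu
      have hIVT := intermediate_value_Icc' hD0 hcu
      have hmem : b₁ + b₂ ∈ Icc ((γ D).1 + (γ D).2) ((γ 0).1 + (γ 0).2) := by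
        rw [hγ0, hγD]; exact ⟨huS, le_of_lt hu⟩
      obtain ⟨t₀, ht₀, hft₀⟩ := hIVT hmem
      have hft₀' : (γ t₀).1 + (γ t₀).2 = b₁ + b₂ := hft₀
      rcases havoid (γ t₀) (himg t₀ ht₀) (by rw [hft₀']; linarith) (le_of_eq hft₀') with hx | hy
      · refine ⟨γ t₀, hx, ?_, hadd t₀ ht₀⟩
        linarith
      · exact step t₀ ht₀ hy (le_of_eq hft₀')
  obtain ⟨z, hzx, hzy, hzadd⟩ := main
  have f1 : cE.1 - z.1 ≤ dist cE z := by
    rw [ldist]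
    exact le_trans (le_abs_self _) (le_max_left _ _)
  have f2 : z.2 - cS.2 ≤ dist z cS := by
    rw [ldist]
    exact le_trans (le_abs_self _) (le_max_right _ _)
  rw [hE1] at f1
  rw [hS1] at f2
  linarith

lemma geo_split {X : Type*} [MetricSpace X] {p q : X} {γ : ℝ → X} (hgeo : IsGeodesic p q γ)
    {t : ℝ} (ht : t ∈ Icc 0 (dist p q)) : dist p (γ t) + dist (γ t) q = dist p q := by
  have h0 : (0:ℝ) ∈ Icc (0:ℝ) (dist p q) := ⟨le_refl _, dist_nonneg⟩
  have hD : dist p q ∈ Icc (0:ℝ) (dist p q) := ⟨dist_nonneg, le_refl _⟩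
  have e1 := hgeo.2.2 0 h0 t ht
  have e2 := hgeo.2.2 t ht (dist p q) hD
  rw [hgeo.1] at e1
  rw [hgeo.2.1] at e2
  rw [e1, e2, zero_sub, abs_neg, abs_of_nonneg ht.1, abs_of_nonpos (by linarith [ht.2])]
  ring

lemma neg_dist (p q : ℝ × ℝ) :
    dist ((-p.1, -p.2) : ℝ × ℝ) ((-q.1, -q.2) : ℝ × ℝ) = dist p q := by
  rw [ldist, ldist]
  have e1 : -p.1 - -q.1 = -(p.1 - q.1) := by ring
  have e2 : -p.2 - -q.2 = -(p.2 - q.2) := by ring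
  simp only
  rw [e1, e2, abs_neg, abs_neg]

lemma geodConvex_neg {A : Set (ℝ × ℝ)} (h : GeodConvex A) :
    GeodConvex ((fun z : ℝ × ℝ => ((-z.1, -z.2) : ℝ × ℝ)) ⁻¹' A) := by
  intro p hp q hq
  obtain ⟨γ, hgeo, himg⟩ := h ((-p.1, -p.2) : ℝ × ℝ) hp ((-q.1, -q.2) : ℝ × ℝ) hq
  have hd : dist p q = dist ((-p.1, -p.2) : ℝ × ℝ) ((-q.1, -q.2) : ℝ × ℝ) := (neg_dist p q).symm
  refine ⟨fun t => (-(γ t).1, -(γ t).2), ⟨?_, ?_, ?_⟩, ?_⟩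
  · show ((-(γ 0).1, -(γ 0).2) : ℝ × ℝ) = p
    rw [hgeo.1]
    simp
  · show ((-(γ (dist p q)).1, -(γ (dist p q)).2) : ℝ × ℝ) = q
    rw [hd, hgeo.2.1]
    simp
  · intro s hs t ht
    rw [hd] at hs ht
    rw [neg_dist (γ s) (γ t)]
    exact hgeo.2.2 s hs t ht
  · intro t ht
    rw [hd] at ht
    have := himg t ht
    simpa using this

lemma core (A : Set (ℝ × ℝ)) (hgc : GeodConvex A)
    (a₁ b₁ a₂ b₂ : ℝ) (h1 : a₁ ≤ b₁) (h2 : a₂ ≤ b₂)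
    (cW cE cS cN : ℝ × ℝ) (rW rE rS rN : ℝ)
    (hrW : 0 ≤ rW) (hrE : 0 ≤ rE) (hrS : 0 ≤ rS) (hrN : 0 ≤ rN)
    (hWm : cW ∈ A) (hEm : cE ∈ A) (hSm : cS ∈ A) (hNm : cN ∈ A)
    (hW1 : cW.1 = b₁ - rW) (hW2 : cW.1 - rW ≤ a₁) (hW3 : cW.2 - rW ≤ a₂) (hW4 : b₂ ≤ cW.2 + rW)
    (hE1 : cE.1 = a₁ + rE) (hE2 : b₁ ≤ cE.1 + rE) (hE3 : cE.2 - rE ≤ a₂) (hE4 : b₂ ≤ cE.2 + rE)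
    (hS1 : cS.2 = b₂ - rS) (hS2 : cS.1 - rS ≤ a₁) (hS3 : b₁ ≤ cS.1 + rS) (hS4 : cS.2 - rS ≤ a₂)
    (hN1 : cN.2 = a₂ + rN) (hN2 : cN.1 - rN ≤ a₁) (hN3 : b₁ ≤ cN.1 + rN) (hN4 : b₂ ≤ cN.2 + rN) :
    ∃ z ∈ A, a₁ ≤ z.1 ∧ z.1 ≤ b₁ ∧ a₂ ≤ z.2 ∧ z.2 ≤ b₂ := by
  by_contra hno
  push_neg at hno
  have hout : ∀ z ∈ A, z.1 < a₁ ∨ b₁ < z.1 ∨ z.2 < a₂ ∨ b₂ < z.2 := by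
    intro z hz
    by_contra hc
    push_neg at hc
    exact absurd (hno z hz hc.1 hc.2.1 hc.2.2.1) (not_lt.mpr hc.2.2.2)
  set A' := {z ∈ A | a₁ + a₂ ≤ z.1 + z.2 ∧ z.1 + z.2 ≤ b₁ + b₂} with hA'def
  have huW : cW.1 + cW.2 ≤ b₁ + b₂ := by linarith
  have huE : a₁ + a₂ ≤ cE.1 + cE.2 := by linarith
  -- A' is nonempty
  have hA'ne : A'.Nonempty := by
    by_cases hWin : a₁ + a₂ ≤ cW.1 + cW.2
    · exact ⟨cW, hWm, hWin, huW⟩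
    · push_neg at hWin
      obtain ⟨γ, hgeo, himg⟩ := hgc cW hWm cE hEm
      have hD0 : (0:ℝ) ≤ dist cW cE := dist_nonneg
      have hcont : ContinuousOn γ (Icc 0 (dist cW cE)) := geo_cont hgeo
      have hcu : ContinuousOn (fun t => (γ t).1 + (γ t).2) (Icc 0 (dist cW cE)) :=
        (continuous_fst.comp_continuousOn hcont).add (continuous_snd.comp_continuousOn hcont)
      have hIVT := intermediate_value_Icc hD0 hcu
      have hmem : a₁ + a₂ ∈ Icc ((γ 0).1 + (γ 0).2) ((γ (dist cW cE)).1 + (γ (dist cW cE)).2) := by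
        rw [hgeo.1, hgeo.2.1]
        exact ⟨le_of_lt hWin, huE⟩
      obtain ⟨t, ht, hft⟩ := hIVT hmem
      have hft' : (γ t).1 + (γ t).2 = a₁ + a₂ := hft
      exact ⟨γ t, himg t ht, le_of_eq hft'.symm, by rw [hft']; linarith⟩
  -- A' is preconnected
  have hjoin : ∀ p ∈ A', ∀ q ∈ A', JoinedIn A' p q := by
    intro p hp q hq
    obtain ⟨γ, hgeo, himg⟩ := hgc p hp.1 q hq.1
    have hD0 : (0:ℝ) ≤ dist p q := dist_nonneg
    have hcont : ContinuousOn γ (Icc 0 (dist p q)) := geo_cont hgeo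
    have hmapsto : ∀ s : unitInterval, (s : ℝ) * dist p q ∈ Icc (0:ℝ) (dist p q) :=
      fun s => ⟨mul_nonneg s.2.1 hD0, mul_le_of_le_one_left hD0 s.2.2⟩
    have hpathcont : Continuous (fun s : unitInterval => γ ((s : ℝ) * dist p q)) := by
      apply hcont.comp_continuous
      · exact (continuous_subtype_val.mul continuous_const)
      · exact hmapsto
    refine ⟨⟨⟨fun s => γ ((s : ℝ) * dist p q), hpathcont⟩, ?_, ?_⟩, ?_⟩
    · show γ ((0 : ℝ) * dist p q) = p
      rw [zero_mul, hgeo.1]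
    · show γ ((1 : ℝ) * dist p q) = q
      rw [one_mul, hgeo.2.1]
    · intro s
      show γ ((s : ℝ) * dist p q) ∈ A'
      have hmem := himg _ (hmapsto s)
      have hsplit := geo_split hgeo (hmapsto s)
      have hbtw := btw_u hsplit
      refine ⟨hmem, ?_, ?_⟩
      · exact le_trans (le_min hp.2.1 hq.2.1) hbtw.1
      · exact le_trans hbtw.2 (max_le hp.2.2 hq.2.2)
  have hpre : IsPreconnected A' := by
    obtain ⟨z₀, hz₀⟩ := hA'ne
    exact (IsPathConnected.isConnected ⟨z₀, hz₀, fun _ hz => hjoin z₀ hz₀ _ hz⟩).isPreconnected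
  set Va := {z : ℝ × ℝ | b₁ < z.1 ∨ z.2 < a₂} with hVadef
  set Vb := {z : ℝ × ℝ | z.1 < a₁ ∨ b₂ < z.2} with hVbdef
  have hVaOpen : IsOpen Va :=
    (isOpen_lt continuous_const continuous_fst).union (isOpen_lt continuous_snd continuous_const)
  have hVbOpen : IsOpen Vb :=
    (isOpen_lt continuous_fst continuous_const).union (isOpen_lt continuous_const continuous_snd)
  have hcover : A' ⊆ Va ∪ Vb := by
    intro z hz
    rcases hout z hz.1 with h | h | h | h
    · exact Or.inr (Or.inl h)
    · exact Or.inl (Or.inl h)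
    · exact Or.inl (Or.inr h)
    · exact Or.inr (Or.inr h)
  have hdisj : ¬((A' ∩ Va).Nonempty ∧ (A' ∩ Vb).Nonempty) := by
    rintro ⟨hne1, hne2⟩
    obtain ⟨z, hzA', hzVa, hzVb⟩ := hpre Va Vb hVaOpen hVbOpen hcover hne1 hne2
    have hw1 := hzA'.2.1
    have hw2 := hzA'.2.2
    rcases hzVa with h | h <;> rcases hzVb with h' | h' <;> linarith
  rcases (A' ∩ Va).eq_empty_or_nonempty with hVaE | hVaNe
  · -- A' ⊆ Vb : apply side directly
    have havoid : ∀ z ∈ A, a₁ + a₂ ≤ z.1 + z.2 → z.1 + z.2 ≤ b₁ + b₂ → z.1 < a₁ ∨ b₂ < z.2 := by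
      intro z hz hl hh
      have hzA' : z ∈ A' := ⟨hz, hl, hh⟩
      rcases hcover hzA' with hva | hvb
      · exact absurd (Set.mem_inter hzA' hva) (by rw [hVaE]; exact Set.notMem_empty z)
      · exact hvb
    exact side A hgc a₁ b₁ a₂ b₂ rE rS cE cS h1 h2 hrE hrS hEm hSm hE1 hE2 hE3 hE4 hS1 hS2 hS3 havoid
  · have hVbE : A' ∩ Vb = ∅ := by
      rcases (A' ∩ Vb).eq_empty_or_nonempty with h | h
      · exact h
      · exact absurd ⟨hVaNe, h⟩ hdisj
    -- A' ⊆ Va : apply side to negated configuration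
    set n : ℝ × ℝ → ℝ × ℝ := fun z => ((-z.1, -z.2) : ℝ × ℝ) with hndef
    have hAn : GeodConvex (n ⁻¹' A) := geodConvex_neg hgc
    have havoid : ∀ z ∈ n ⁻¹' A, (-b₁) + (-b₂) ≤ z.1 + z.2 → z.1 + z.2 ≤ (-a₁) + (-a₂) →
        z.1 < -b₁ ∨ -a₂ < z.2 := by
      intro z hz hl hh
      have hwA : ((-z.1, -z.2) : ℝ × ℝ) ∈ A := hz
      have hwA' : ((-z.1, -z.2) : ℝ × ℝ) ∈ A' := ⟨hwA, by simp only; linarith, by simp only; linarith⟩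
      rcases hcover hwA' with hva | hvb
      · rcases hva with h | h
        · left; simp only at h; linarith
        · right; simp only at h; linarith
      · exact absurd (Set.mem_inter hwA' hvb) (by rw [hVbE]; exact Set.notMem_empty _)
    have hEm' : ((-cW.1, -cW.2) : ℝ × ℝ) ∈ n ⁻¹' A := by
      show ((-(-cW.1), -(-cW.2)) : ℝ × ℝ) ∈ A
      simpa using hWm
    have hSm' : ((-cN.1, -cN.2) : ℝ × ℝ) ∈ n ⁻¹' A := by
      show ((-(-cN.1), -(-cN.2)) : ℝ × ℝ) ∈ A
      simpa using hNm
    exact side (n ⁻¹' A) hAn (-b₁) (-a₁) (-b₂) (-a₂) rW rN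
      ((-cW.1, -cW.2) : ℝ × ℝ) ((-cN.1, -cN.2) : ℝ × ℝ)
      (by linarith) (by linarith) hrW hrN hEm' hSm'
      (by simp only; linarith) (by simp only; linarith) (by simp only; linarith)
      (by simp only; linarith)
      (by simp only; linarith) (by simp only; linarith) (by simp only; linarith)
      havoid


lemma min4_cases (v1 v2 v3 v4 : ℝ) :
    min (min v1 v2) (min v3 v4) = v1 ∨ min (min v1 v2) (min v3 v4) = v2 ∨
    min (min v1 v2) (min v3 v4) = v3 ∨ min (min v1 v2) (min v3 v4) = v4 := by
  rcases min_cases (min v1 v2) (min v3 v4) with ⟨e, _⟩ | ⟨e, _⟩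
  · rcases min_cases v1 v2 with ⟨e2, _⟩ | ⟨e2, _⟩
    · exact Or.inl (e.trans e2)
    · exact Or.inr (Or.inl (e.trans e2))
  · rcases min_cases v3 v4 with ⟨e2, _⟩ | ⟨e2, _⟩
    · exact Or.inr (Or.inr (Or.inl (e.trans e2)))
    · exact Or.inr (Or.inr (Or.inr (e.trans e2)))

lemma max4_cases (v1 v2 v3 v4 : ℝ) :
    max (max v1 v2) (max v3 v4) = v1 ∨ max (max v1 v2) (max v3 v4) = v2 ∨
    max (max v1 v2) (max v3 v4) = v3 ∨ max (max v1 v2) (max v3 v4) = v4 := by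
  rcases max_cases (max v1 v2) (max v3 v4) with ⟨e, _⟩ | ⟨e, _⟩
  · rcases max_cases v1 v2 with ⟨e2, _⟩ | ⟨e2, _⟩
    · exact Or.inl (e.trans e2)
    · exact Or.inr (Or.inl (e.trans e2))
  · rcases max_cases v3 v4 with ⟨e2, _⟩ | ⟨e2, _⟩
    · exact Or.inr (Or.inr (Or.inl (e.trans e2)))
    · exact Or.inr (Or.inr (Or.inr (e.trans e2)))

/-- Every nonempty closed and geodesically convex subset of the `l∞` plane
`ℝ²_∞`, with the induced metric, is hyperconvex. -/
theorem closed_geodConvex_hyperconvex (A : Set (ℝ × ℝ)) (hne : A.Nonempty)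
    (hcl : IsClosed A) (hgc : GeodConvex A) :
    Hyperconvex ↥A := by
  intro ι x r hr hd
  rcases isEmpty_or_nonempty ι with hι | hι
  · obtain ⟨a, ha⟩ := hne
    refine ⟨⟨a, ha⟩, ?_⟩
    rw [Set.mem_iInter]
    exact fun i => (hι.false i).elim
  · set c : ι → ℝ × ℝ := fun i => (x i : ℝ × ℝ) with hcdef
    have hcA : ∀ i, c i ∈ A := fun i => (x i).2
    have hdist : ∀ i j, dist (c i) (c j) ≤ r i + r j := by
      intro i j
      rw [← Subtype.dist_eq (x i) (x j)]
      exact hd i j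
    have hpair1 : ∀ i j, (c i).1 - r i ≤ (c j).1 + r j := by
      intro i j
      have h := hdist i j
      rw [ldist] at h
      have h2 : |(c i).1 - (c j).1| ≤ r i + r j := le_trans (le_max_left _ _) h
      have := le_abs_self ((c i).1 - (c j).1)
      linarith
    have hpair2 : ∀ i j, (c i).2 - r i ≤ (c j).2 + r j := by
      intro i j
      have h := hdist i j
      rw [ldist] at h
      have h2 : |(c i).2 - (c j).2| ≤ r i + r j := le_trans (le_max_right _ _) h
      have := le_abs_self ((c i).2 - (c j).2)
      linarith
    have hBdd1a : BddAbove (Set.range fun i => (c i).1 - r i) := by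
      obtain ⟨j⟩ := hι
      exact ⟨(c j).1 + r j, by rintro _ ⟨i, rfl⟩; exact hpair1 i j⟩
    have hBdd1b : BddBelow (Set.range fun i => (c i).1 + r i) := by
      obtain ⟨j⟩ := hι
      exact ⟨(c j).1 - r j, by rintro _ ⟨i, rfl⟩; exact hpair1 j i⟩
    have hBdd2a : BddAbove (Set.range fun i => (c i).2 - r i) := by
      obtain ⟨j⟩ := hι
      exact ⟨(c j).2 + r j, by rintro _ ⟨i, rfl⟩; exact hpair2 i j⟩
    have hBdd2b : BddBelow (Set.range fun i => (c i).2 + r i) := by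
      obtain ⟨j⟩ := hι
      exact ⟨(c j).2 - r j, by rintro _ ⟨i, rfl⟩; exact hpair2 j i⟩
    set a₁ := ⨆ i, ((c i).1 - r i) with ha₁def
    set b₁ := ⨅ i, ((c i).1 + r i) with hb₁def
    set a₂ := ⨆ i, ((c i).2 - r i) with ha₂def
    set b₂ := ⨅ i, ((c i).2 + r i) with hb₂def
    have hia1 : ∀ i, (c i).1 - r i ≤ a₁ := fun i => le_ciSup hBdd1a i
    have hib1 : ∀ i, b₁ ≤ (c i).1 + r i := fun i => ciInf_le hBdd1b i
    have hia2 : ∀ i, (c i).2 - r i ≤ a₂ := fun i => le_ciSup hBdd2a i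
    have hib2 : ∀ i, b₂ ≤ (c i).2 + r i := fun i => ciInf_le hBdd2b i
    have h1 : a₁ ≤ b₁ := ciSup_le fun i => le_ciInf fun j => hpair1 i j
    have h2 : a₂ ≤ b₂ := ciSup_le fun i => le_ciInf fun j => hpair2 i j
    have key : ∀ n : ℕ, ∃ z ∈ A, a₁ - 1/((n:ℝ)+1) ≤ z.1 ∧ z.1 ≤ b₁ + 1/((n:ℝ)+1) ∧
        a₂ - 1/((n:ℝ)+1) ≤ z.2 ∧ z.2 ≤ b₂ + 1/((n:ℝ)+1) := by
      intro n
      set δ : ℝ := 1/((n:ℝ)+1) with hδdef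
      have hδ : 0 < δ := by positivity
      obtain ⟨iW, hiW⟩ : ∃ i, (c i).1 + r i < b₁ + δ := exists_lt_of_ciInf_lt (by linarith)
      obtain ⟨iE, hiE⟩ : ∃ i, a₁ - δ < (c i).1 - r i := exists_lt_of_lt_ciSup (by linarith)
      obtain ⟨iS, hiS⟩ : ∃ i, (c i).2 + r i < b₂ + δ := exists_lt_of_ciInf_lt (by linarith)
      obtain ⟨iN, hiN⟩ : ∃ i, a₂ - δ < (c i).2 - r i := exists_lt_of_lt_ciSup (by linarith)
      set A₁ := max (max ((c iW).1 - r iW) ((c iE).1 - r iE))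
        (max ((c iS).1 - r iS) ((c iN).1 - r iN)) with hA₁def
      set B₁ := min (min ((c iW).1 + r iW) ((c iE).1 + r iE))
        (min ((c iS).1 + r iS) ((c iN).1 + r iN)) with hB₁def
      set A₂ := max (max ((c iW).2 - r iW) ((c iE).2 - r iE))
        (max ((c iS).2 - r iS) ((c iN).2 - r iN)) with hA₂def
      set B₂ := min (min ((c iW).2 + r iW) ((c iE).2 + r iE))
        (min ((c iS).2 + r iS) ((c iN).2 + r iN)) with hB₂def
      have hA₁a : A₁ ≤ a₁ := by
        apply max_le <;> apply max_le <;> apply hia1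
      have hB₁b : b₁ ≤ B₁ := by
        apply le_min <;> apply le_min <;> apply hib1
      have hA₂a : A₂ ≤ a₂ := by
        apply max_le <;> apply max_le <;> apply hia2
      have hB₂b : b₂ ≤ B₂ := by
        apply le_min <;> apply le_min <;> apply hib2
      have hAB1 : A₁ ≤ B₁ := le_trans hA₁a (le_trans h1 hB₁b)
      have hAB2 : A₂ ≤ B₂ := le_trans hA₂a (le_trans h2 hB₂b)
      -- ball conditions for each of the four chosen centers
      have hball : ∀ i, (i = iW ∨ i = iE ∨ i = iS ∨ i = iN) →
          (c i).1 - r i ≤ A₁ ∧ B₁ ≤ (c i).1 + r i ∧ (c i).2 - r i ≤ A₂ ∧ B₂ ≤ (c i).2 + r i := by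
        rintro i (rfl | rfl | rfl | rfl)
        · exact ⟨le_trans (le_max_left _ _) (le_max_left _ _),
            le_trans (min_le_left _ _) (min_le_left _ _),
            le_trans (le_max_left _ _) (le_max_left _ _),
            le_trans (min_le_left _ _) (min_le_left _ _)⟩
        · exact ⟨le_trans (le_max_right _ _) (le_max_left _ _),
            le_trans (min_le_left _ _) (min_le_right _ _),
            le_trans (le_max_right _ _) (le_max_left _ _),
            le_trans (min_le_left _ _) (min_le_right _ _)⟩
        · exact ⟨le_trans (le_max_left _ _) (le_max_right _ _),
            le_trans (min_le_right _ _) (min_le_left _ _),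
            le_trans (le_max_left _ _) (le_max_right _ _),
            le_trans (min_le_right _ _) (min_le_left _ _)⟩
        · exact ⟨le_trans (le_max_right _ _) (le_max_right _ _),
            le_trans (min_le_right _ _) (min_le_right _ _),
            le_trans (le_max_right _ _) (le_max_right _ _),
            le_trans (min_le_right _ _) (min_le_right _ _)⟩
      obtain ⟨cw, rw_, hcwA, hrw, hcw1, hcw2, hcw3, hcw4⟩ :
          ∃ cw rw_, cw ∈ A ∧ 0 ≤ rw_ ∧ cw.1 = B₁ - rw_ ∧ cw.1 - rw_ ≤ A₁ ∧
            cw.2 - rw_ ≤ A₂ ∧ B₂ ≤ cw.2 + rw_ := by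
        rcases min4_cases ((c iW).1 + r iW) ((c iE).1 + r iE) ((c iS).1 + r iS)
            ((c iN).1 + r iN) with e | e | e | e
        · obtain ⟨u1, _, u3, u4⟩ := hball iW (Or.inl rfl)
          exact ⟨c iW, r iW, hcA iW, hr iW, by rw [← hB₁def] at e; linarith, u1, u3, u4⟩
        · obtain ⟨u1, _, u3, u4⟩ := hball iE (Or.inr (Or.inl rfl))
          exact ⟨c iE, r iE, hcA iE, hr iE, by rw [← hB₁def] at e; linarith, u1, u3, u4⟩
        · obtain ⟨u1, _, u3, u4⟩ := hball iS (Or.inr (Or.inr (Or.inl rfl)))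
          exact ⟨c iS, r iS, hcA iS, hr iS, by rw [← hB₁def] at e; linarith, u1, u3, u4⟩
        · obtain ⟨u1, _, u3, u4⟩ := hball iN (Or.inr (Or.inr (Or.inr rfl)))
          exact ⟨c iN, r iN, hcA iN, hr iN, by rw [← hB₁def] at e; linarith, u1, u3, u4⟩
      obtain ⟨ce, re_, hceA, hre, hce1, hce2, hce3, hce4⟩ :
          ∃ ce re_, ce ∈ A ∧ 0 ≤ re_ ∧ ce.1 = A₁ + re_ ∧ B₁ ≤ ce.1 + re_ ∧
            ce.2 - re_ ≤ A₂ ∧ B₂ ≤ ce.2 + re_ := by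
        rcases max4_cases ((c iW).1 - r iW) ((c iE).1 - r iE) ((c iS).1 - r iS)
            ((c iN).1 - r iN) with e | e | e | e
        · obtain ⟨_, u2, u3, u4⟩ := hball iW (Or.inl rfl)
          exact ⟨c iW, r iW, hcA iW, hr iW, by rw [← hA₁def] at e; linarith, u2, u3, u4⟩
        · obtain ⟨_, u2, u3, u4⟩ := hball iE (Or.inr (Or.inl rfl))
          exact ⟨c iE, r iE, hcA iE, hr iE, by rw [← hA₁def] at e; linarith, u2, u3, u4⟩
        · obtain ⟨_, u2, u3, u4⟩ := hball iS (Or.inr (Or.inr (Or.inl rfl)))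
          exact ⟨c iS, r iS, hcA iS, hr iS, by rw [← hA₁def] at e; linarith, u2, u3, u4⟩
        · obtain ⟨_, u2, u3, u4⟩ := hball iN (Or.inr (Or.inr (Or.inr rfl)))
          exact ⟨c iN, r iN, hcA iN, hr iN, by rw [← hA₁def] at e; linarith, u2, u3, u4⟩
      obtain ⟨cs, rs_, hcsA, hrs, hcs1, hcs2, hcs3, hcs4⟩ :
          ∃ cs rs_, cs ∈ A ∧ 0 ≤ rs_ ∧ cs.2 = B₂ - rs_ ∧ cs.1 - rs_ ≤ A₁ ∧
            B₁ ≤ cs.1 + rs_ ∧ cs.2 - rs_ ≤ A₂ := by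
        rcases min4_cases ((c iW).2 + r iW) ((c iE).2 + r iE) ((c iS).2 + r iS)
            ((c iN).2 + r iN) with e | e | e | e
        · obtain ⟨u1, u2, u3, _⟩ := hball iW (Or.inl rfl)
          exact ⟨c iW, r iW, hcA iW, hr iW, by rw [← hB₂def] at e; linarith, u1, u2, u3⟩
        · obtain ⟨u1, u2, u3, _⟩ := hball iE (Or.inr (Or.inl rfl))
          exact ⟨c iE, r iE, hcA iE, hr iE, by rw [← hB₂def] at e; linarith, u1, u2, u3⟩
        · obtain ⟨u1, u2, u3, _⟩ := hball iS (Or.inr (Or.inr (Or.inl rfl)))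
          exact ⟨c iS, r iS, hcA iS, hr iS, by rw [← hB₂def] at e; linarith, u1, u2, u3⟩
        · obtain ⟨u1, u2, u3, _⟩ := hball iN (Or.inr (Or.inr (Or.inr rfl)))
          exact ⟨c iN, r iN, hcA iN, hr iN, by rw [← hB₂def] at e; linarith, u1, u2, u3⟩
      obtain ⟨cn, rn_, hcnA, hrn, hcn1, hcn2, hcn3, hcn4⟩ :
          ∃ cn rn_, cn ∈ A ∧ 0 ≤ rn_ ∧ cn.2 = A₂ + rn_ ∧ cn.1 - rn_ ≤ A₁ ∧
            B₁ ≤ cn.1 + rn_ ∧ B₂ ≤ cn.2 + rn_ := by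
        rcases max4_cases ((c iW).2 - r iW) ((c iE).2 - r iE) ((c iS).2 - r iS)
            ((c iN).2 - r iN) with e | e | e | e
        · obtain ⟨u1, u2, _, u4⟩ := hball iW (Or.inl rfl)
          exact ⟨c iW, r iW, hcA iW, hr iW, by rw [← hA₂def] at e; linarith, u1, u2, u4⟩
        · obtain ⟨u1, u2, _, u4⟩ := hball iE (Or.inr (Or.inl rfl))
          exact ⟨c iE, r iE, hcA iE, hr iE, by rw [← hA₂def] at e; linarith, u1, u2, u4⟩
        · obtain ⟨u1, u2, _, u4⟩ := hball iS (Or.inr (Or.inr (Or.inl rfl)))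
          exact ⟨c iS, r iS, hcA iS, hr iS, by rw [← hA₂def] at e; linarith, u1, u2, u4⟩
        · obtain ⟨u1, u2, _, u4⟩ := hball iN (Or.inr (Or.inr (Or.inr rfl)))
          exact ⟨c iN, r iN, hcA iN, hr iN, by rw [← hA₂def] at e; linarith, u1, u2, u4⟩
      obtain ⟨z, hzA, hz1, hz2, hz3, hz4⟩ :=
        core A hgc A₁ B₁ A₂ B₂ hAB1 hAB2 cw ce cs cn rw_ re_ rs_ rn_
          hrw hre hrs hrn hcwA hceA hcsA hcnA
          hcw1 hcw2 hcw3 hcw4 hce1 hce2 hce3 hce4 hcs1 hcs2 hcs3 hcs4 hcn1 hcn2 hcn3 hcn4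
      refine ⟨z, hzA, ?_, ?_, ?_, ?_⟩
      · have : a₁ - δ < (c iE).1 - r iE := hiE
        have h5 : (c iE).1 - r iE ≤ A₁ := le_trans (le_max_right _ _) (le_max_left _ _)
        linarith
      · have h5 : B₁ ≤ (c iW).1 + r iW := le_trans (min_le_left _ _) (min_le_left _ _)
        linarith [hiW]
      · have h5 : (c iN).2 - r iN ≤ A₂ := le_trans (le_max_right _ _) (le_max_right _ _)
        linarith [hiN]
      · have h5 : B₂ ≤ (c iS).2 + r iS := le_trans (min_le_right _ _) (min_le_left _ _)
        linarith [hiS]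
    choose z hzA hz1 hz2 hz3 hz4 using key
    set C : ℕ → Set (ℝ × ℝ) := fun n => A ∩
      (Icc (a₁ - 1/((n:ℝ)+1)) (b₁ + 1/((n:ℝ)+1)) ×ˢ Icc (a₂ - 1/((n:ℝ)+1)) (b₂ + 1/((n:ℝ)+1)))
      with hCdef
    have hCne : ∀ n, (C n).Nonempty :=
      fun n => ⟨z n, hzA n, ⟨⟨hz1 n, hz2 n⟩, hz3 n, hz4 n⟩⟩
    have hCdec : ∀ n, C (n + 1) ⊆ C n := by
      intro n w hw
      obtain ⟨hwA, ⟨⟨e1, e2⟩, e3, e4⟩⟩ := hw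
      have hmono : 1/((n:ℝ)+1+1) ≤ 1/((n:ℝ)+1) := by
        apply one_div_le_one_div_of_le
        · positivity
        · linarith
      push_cast at e1 e2 e3 e4
      exact ⟨hwA, ⟨⟨by linarith, by linarith⟩, by linarith, by linarith⟩⟩
    have hCcl : ∀ n, IsClosed (C n) := fun n => hcl.inter (isClosed_Icc.prod isClosed_Icc)
    have hC0cpt : IsCompact (C 0) :=
      IsCompact.of_isClosed_subset (isCompact_Icc.prod isCompact_Icc) (hCcl 0)
        Set.inter_subset_right
    obtain ⟨zz, hzz⟩ :=
      IsCompact.nonempty_iInter_of_sequence_nonempty_isCompact_isClosed C hCdec hCne hC0cpt hCcl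
    have hzzp := Set.mem_iInter.mp hzz
    have hzzA : zz ∈ A := (hzzp 0).1
    have hb1 : zz.1 ≤ b₁ := by
      by_contra hgt
      push_neg at hgt
      obtain ⟨n, hn⟩ := exists_nat_one_div_lt (sub_pos.mpr hgt)
      have := (hzzp n).2.1.2
      linarith
    have ha1 : a₁ ≤ zz.1 := by
      by_contra hgt
      push_neg at hgt
      obtain ⟨n, hn⟩ := exists_nat_one_div_lt (sub_pos.mpr hgt)
      have := (hzzp n).2.1.1
      linarith
    have hb2 : zz.2 ≤ b₂ := by
      by_contra hgt
      push_neg at hgt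
      obtain ⟨n, hn⟩ := exists_nat_one_div_lt (sub_pos.mpr hgt)
      have := (hzzp n).2.2.2
      linarith
    have ha2 : a₂ ≤ zz.2 := by
      by_contra hgt
      push_neg at hgt
      obtain ⟨n, hn⟩ := exists_nat_one_div_lt (sub_pos.mpr hgt)
      have := (hzzp n).2.2.1
      linarith
    refine ⟨⟨zz, hzzA⟩, ?_⟩
    rw [Set.mem_iInter]
    intro i
    show dist (x i) (⟨zz, hzzA⟩ : ↥A) ≤ r i
    rw [Subtype.dist_eq]
    rw [show ((x i : ℝ × ℝ)) = c i from rfl]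
    rw [ldist]
    apply max_le
    · rw [abs_le]
      constructor
      · have := hib1 i
        linarith
      · have := hia1 i
        linarith
    · rw [abs_le]
      constructor
      · have := hib2 i
        linarith
      · have := hia2 i
        linarith
end

section
/- Let u ∈ ℝ²_∞, let p ∈ S₁^ε(u) and q ∈ S₂^δ(u) for signs ε, δ ∈ {+,−}, and let γ be a geodesic between the points p and q in ℝ²_∞. Then there exists a parameter t in the domain of γ such that γ(t) ∈ I^{εδ}(u), where I^{εδ}(u) = {(u₁ + ε t, u₂ + δ t) : t ≥ 0} is the εδ-diagonal ray at u. -/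
/-- The sector `S₁^ε(p)` in the `l∞` plane: points `q` with `d∞(p,q) = ε(q₁ − p₁)`. -/
def sector1 (ε : ℝ) (p : ℝ × ℝ) : Set (ℝ × ℝ) :=
  {q | dist p q = ε * (q.1 - p.1)}

/-- The sector `S₂^ε(p)` in the `l∞` plane: points `q` with `d∞(p,q) = ε(q₂ − p₂)`. -/
def sector2 (ε : ℝ) (p : ℝ × ℝ) : Set (ℝ × ℝ) :=
  {q | dist p q = ε * (q.2 - p.2)}

/-- The `ε₁ε₂`-diagonal ray at `p`: `{(p₁ + ε₁ t, p₂ + ε₂ t) : t ≥ 0}`. -/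
def ray (ε₁ ε₂ : ℝ) (p : ℝ × ℝ) : Set (ℝ × ℝ) :=
  {q | ∃ t : ℝ, 0 ≤ t ∧ q = (p.1 + ε₁ * t, p.2 + ε₂ * t)}

/-!
Write `g t = ε ((γ t)₁ − u₁)` and `k t = δ ((γ t)₂ − u₂)`. Both are 1-Lipschitz, since `γ` is an
isometry and each coordinate is 1-Lipschitz for `d∞`. At `t = 0` we have `g = d∞(u,p) ≥ k`, at
`t = d∞(p,q)` we have `k = d∞(u,q) ≥ g`, so `g = k` at some `t₀`, and `γ t₀` lies on the ray as soon
as this common value is nonnegative. That follows from the Lipschitz bounds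
`g t₀ ≥ d∞(u,p) − t₀`, `k t₀ ≥ d∞(u,q) − (d∞(p,q) − t₀)` and the triangle inequality.
-/

open Set

theorem IsGeodesic.lipschitzOnWith {X : Type*} [MetricSpace X] {p q : X} {γ : ℝ → X}
    (hγ : IsGeodesic p q γ) : LipschitzOnWith 1 γ (Icc 0 (dist p q)) :=
  LipschitzOnWith.of_dist_le_mul fun s hs t ht => by
    rw [hγ.2.2 s hs t ht, NNReal.coe_one, one_mul, Real.dist_eq]

theorem LipschitzWith.sub_le_dist {X : Type*} [PseudoMetricSpace X] {f : X → ℝ}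
    (hf : LipschitzWith 1 f) (x y : X) : f x - f y ≤ dist x y :=
  (Real.sub_le_dist _ _).trans (by simpa using hf.dist_le_mul x y)

theorem LipschitzOnWith.sub_le_abs_sub {f : ℝ → ℝ} {s : Set ℝ} (hf : LipschitzOnWith 1 f s)
    {a b : ℝ} (ha : a ∈ s) (hb : b ∈ s) : f a - f b ≤ |a - b| :=
  (Real.sub_le_dist _ _).trans (by simpa [Real.dist_eq] using hf.dist_le_mul a ha b hb)

theorem exists_eq_of_lipschitzOnWith_crossing {g k : ℝ → ℝ} {T : ℝ} (hT : 0 ≤ T)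
    (hg : LipschitzOnWith 1 g (Icc 0 T)) (hk : LipschitzOnWith 1 k (Icc 0 T))
    (h₀ : k 0 ≤ g 0) (h₁ : g T ≤ k T) :
    ∃ t ∈ Icc 0 T, g t = k t ∧ g 0 + k T - T ≤ 2 * g t := by
  obtain ⟨t, ht, hgk⟩ := intermediate_value_Icc' hT (hg.continuousOn.sub hk.continuousOn)
    (show (0 : ℝ) ∈ Icc (g T - k T) (g 0 - k 0) from ⟨by linarith, by linarith⟩)
  have hgk : g t = k t := sub_eq_zero.mp hgk
  have hg0 := hg.sub_le_abs_sub ⟨le_rfl, hT⟩ ht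
  have hkT := hk.sub_le_abs_sub ⟨hT, le_rfl⟩ ht
  rw [zero_sub, abs_neg, abs_of_nonneg ht.1] at hg0
  rw [abs_of_nonneg (sub_nonneg.mpr ht.2)] at hkT
  exact ⟨t, ht, hgk, by linarith⟩

theorem lipschitzWith_signed_fst {ε : ℝ} (hε : |ε| ≤ 1) (u : ℝ × ℝ) :
    LipschitzWith 1 fun x : ℝ × ℝ => ε * (x.1 - u.1) :=
  LipschitzWith.of_dist_le_mul fun x y => by
    rw [Real.dist_eq, ← mul_sub, sub_sub_sub_cancel_right, abs_mul, NNReal.coe_one, one_mul]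
    calc |ε| * |x.1 - y.1| ≤ |x.1 - y.1| := mul_le_of_le_one_left (abs_nonneg _) hε
      _ ≤ dist x y := (Real.dist_eq _ _).symm.trans_le (le_max_left _ _)

theorem lipschitzWith_signed_snd {ε : ℝ} (hε : |ε| ≤ 1) (u : ℝ × ℝ) :
    LipschitzWith 1 fun x : ℝ × ℝ => ε * (x.2 - u.2) :=
  LipschitzWith.of_dist_le_mul fun x y => by
    rw [Real.dist_eq, ← mul_sub, sub_sub_sub_cancel_right, abs_mul, NNReal.coe_one, one_mul]
    calc |ε| * |x.2 - y.2| ≤ |x.2 - y.2| := mul_le_of_le_one_left (abs_nonneg _) hε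
      _ ≤ dist x y := (Real.dist_eq _ _).symm.trans_le (le_max_right _ _)

theorem mem_ray_of_signed_coords_eq {ε δ s : ℝ} (hε : ε * ε = 1) (hδ : δ * δ = 1)
    {u x : ℝ × ℝ} (hs : 0 ≤ s) (h₁ : ε * (x.1 - u.1) = s) (h₂ : δ * (x.2 - u.2) = s) :
    x ∈ ray ε δ u :=
  ⟨s, hs, Prod.ext (by linear_combination (u.1 - x.1) * hε + ε * h₁)
    (by linear_combination (u.2 - x.2) * hδ + δ * h₂)⟩

/-- If `p ∈ S₁^ε(u)`, `q ∈ S₂^δ(u)` and `γ` is a geodesic from `p` to `q` in the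
`l∞` plane, then `γ` meets the diagonal ray `I^{εδ}(u)`. -/
theorem geodesic_meets_ray (u p q : ℝ × ℝ) (ε δ : ℝ)
    (hε : ε = 1 ∨ ε = -1) (hδ : δ = 1 ∨ δ = -1)
    (hp : p ∈ sector1 ε u) (hq : q ∈ sector2 δ u)
    (γ : ℝ → ℝ × ℝ) (hγ : IsGeodesic p q γ) :
    ∃ t ∈ Set.Icc (0 : ℝ) (dist p q), γ t ∈ ray ε δ u := by
  replace hp : dist u p = ε * (p.1 - u.1) := hp
  replace hq : dist u q = δ * (q.2 - u.2) := hq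
  have hε₁ : ε * ε = 1 := by rcases hε with rfl | rfl <;> norm_num
  have hδ₁ : δ * δ = 1 := by rcases hδ with rfl | rfl <;> norm_num
  have hε₂ : |ε| ≤ 1 := by rcases hε with rfl | rfl <;> norm_num
  have hδ₂ : |δ| ≤ 1 := by rcases hδ with rfl | rfl <;> norm_num
  have hfst := lipschitzWith_signed_fst hε₂ u
  have hsnd := lipschitzWith_signed_snd hδ₂ u
  have hγ₀ : γ 0 = p := hγ.1
  have hγ₁ : γ (dist p q) = q := hγ.2.1
  obtain ⟨t, ht, heq, hle⟩ := exists_eq_of_lipschitzOnWith_crossing dist_nonneg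
    (by simpa using hfst.comp_lipschitzOnWith hγ.lipschitzOnWith)
    (by simpa using hsnd.comp_lipschitzOnWith hγ.lipschitzOnWith)
    (by simpa [hγ₀, ← hp, dist_comm u p] using hsnd.sub_le_dist p u)
    (by simpa [hγ₁, ← hq, dist_comm u q] using hfst.sub_le_dist q u)
  simp only [Function.comp_apply, hγ₀, hγ₁, ← hp, ← hq] at heq hle
  have hnonneg : 0 ≤ ε * ((γ t).1 - u.1) := by linarith [dist_triangle_left p q u]
  exact ⟨t, ht, mem_ray_of_signed_coords_eq hε₁ hδ₁ hnonneg rfl heq.symm⟩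
end

section
/- Let A be a geodesically convex subset of the l∞ plane ℝ²_∞ and let p ∈ ℝ²_∞. If each of the four sectors S₁^+(p), S₁^−(p), S₂^+(p), S₂^−(p) of the point p contains a point of A, then p belongs to A. -/
lemma between_aux {a b c : ℝ} (h : |a - c| = |a - b| + |b - c|) :
    min a c ≤ b ∧ b ≤ max a c := by
  rcases abs_cases (a-c) with ⟨h1,h1'⟩|⟨h1,h1'⟩ <;>
  rcases abs_cases (a-b) with ⟨h2,h2'⟩|⟨h2,h2'⟩ <;>
  rcases abs_cases (b-c) with ⟨h3,h3'⟩|⟨h3,h3'⟩ <;>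
  constructor <;>
  first
    | (apply min_le_of_left_le; linarith)
    | (apply min_le_of_right_le; linarith)
    | (apply le_max_of_le_left; linarith)
    | (apply le_max_of_le_right; linarith)

lemma cross_abs (L U V : ℝ) (hL : 0 ≤ L) (u v : ℝ → ℝ)
    (hlip : ∀ s ∈ Set.Icc (0:ℝ) L, ∀ t ∈ Set.Icc (0:ℝ) L,
      |u s - u t| + |v s - v t| = 2 * |s - t|)
    (hu0 : U ≤ u 0) (huL : u L ≤ U) (hv0 : V ≤ v 0) (hvL : v L ≤ V) :
    ∃ t₁ ∈ Set.Icc (0:ℝ) L, ∃ t₂ ∈ Set.Icc (0:ℝ) L, u t₁ = U ∧ v t₂ = V ∧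
      ((V ≤ v t₁ ∧ u t₂ ≤ U) ∨ (v t₁ ≤ V ∧ U ≤ u t₂)) := by
  have hbet : ∀ s r t : ℝ, 0 ≤ s → s ≤ r → r ≤ t → t ≤ L →
      (min (u s) (u t) ≤ u r ∧ u r ≤ max (u s) (u t)) ∧
      (min (v s) (v t) ≤ v r ∧ v r ≤ max (v s) (v t)) := by
    intro s r t h0 h1 h2 h3
    have hs : s ∈ Set.Icc (0:ℝ) L := ⟨h0, by linarith⟩
    have hr : r ∈ Set.Icc (0:ℝ) L := ⟨by linarith, by linarith⟩
    have ht : t ∈ Set.Icc (0:ℝ) L := ⟨by linarith, h3⟩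
    have e1 := hlip s hs r hr
    have e2 := hlip r hr t ht
    have e3 := hlip s hs t ht
    have a1 : |s - r| = r - s := by rw [abs_sub_comm]; exact abs_of_nonneg (by linarith)
    have a2 : |r - t| = t - r := by rw [abs_sub_comm]; exact abs_of_nonneg (by linarith)
    have a3 : |s - t| = t - s := by rw [abs_sub_comm]; exact abs_of_nonneg (by linarith)
    rw [a1] at e1; rw [a2] at e2; rw [a3] at e3
    have tu := abs_sub_le (u s) (u r) (u t)
    have tv := abs_sub_le (v s) (v r) (v t)
    have equ : |u s - u t| = |u s - u r| + |u r - u t| := by linarith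
    have eqv : |v s - v t| = |v s - v r| + |v r - v t| := by linarith
    exact ⟨between_aux equ, between_aux eqv⟩
  have hcu : ContinuousOn u (Set.Icc 0 L) := by
    apply (LipschitzOnWith.continuousOn (K := 2) ?_)
    rw [lipschitzOnWith_iff_dist_le_mul]
    intro s hs t ht
    rw [Real.dist_eq, Real.dist_eq]
    have := hlip s hs t ht
    have := abs_nonneg (v s - v t)
    push_cast
    linarith
  have hcv : ContinuousOn v (Set.Icc 0 L) := by
    apply (LipschitzOnWith.continuousOn (K := 2) ?_)
    rw [lipschitzOnWith_iff_dist_le_mul]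
    intro s hs t ht
    rw [Real.dist_eq, Real.dist_eq]
    have := hlip s hs t ht
    have := abs_nonneg (u s - u t)
    push_cast
    linarith
  obtain ⟨t₁, ht₁, hut₁⟩ := intermediate_value_Icc' hL hcu ⟨huL, hu0⟩
  obtain ⟨t₂, ht₂, hvt₂⟩ := intermediate_value_Icc' hL hcv ⟨hvL, hv0⟩
  refine ⟨t₁, ht₁, t₂, ht₂, hut₁, hvt₂, ?_⟩
  rcases le_total t₁ t₂ with h | h
  · left
    constructor
    · have := ((hbet 0 t₁ t₂ le_rfl ht₁.1 h ht₂.2).2).1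
      rw [hvt₂] at this
      exact le_trans (le_min hv0 le_rfl) this
    · have := ((hbet t₁ t₂ L ht₁.1 h ht₂.2 le_rfl).1).2
      rw [hut₁] at this
      exact le_trans this (max_le le_rfl huL)
  · right
    constructor
    · have := ((hbet t₂ t₁ L ht₂.1 h ht₁.2 le_rfl).2).2
      rw [hvt₂] at this
      exact le_trans this (max_le le_rfl hvL)
    · have := ((hbet 0 t₂ t₁ le_rfl ht₂.1 h ht₁.2).1).1
      rw [hut₁] at this
      exact le_trans (le_min hu0 le_rfl) this

lemma abs_aux (a b : ℝ) : |a + b| + |a - b| = 2 * max |a| |b| := by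
  rcases abs_cases (a+b) with ⟨h1,h1'⟩|⟨h1,h1'⟩ <;> rcases abs_cases (a-b) with ⟨h2,h2'⟩|⟨h2,h2'⟩ <;>
  rcases abs_cases a with ⟨h3,h3'⟩|⟨h3,h3'⟩ <;> rcases abs_cases b with ⟨h4,h4'⟩|⟨h4,h4'⟩ <;>
  rcases max_cases |a| |b| with ⟨h5,h5'⟩|⟨h5,h5'⟩ <;> linarith

lemma geo_points (A : Set (ℝ × ℝ)) (hA : GeodConvex A) (p : ℝ × ℝ) (ε : ℝ)
    (hε : ε = 1 ∨ ε = -1) (X : ℝ × ℝ) (hX : X ∈ A) (Y : ℝ × ℝ) (hY : Y ∈ A)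
    (hu0 : p.1 + p.2 ≤ X.1 + X.2) (huL : Y.1 + Y.2 ≤ p.1 + p.2)
    (hv0 : ε * ((p.1 - p.2) - (X.1 - X.2)) ≤ 0)
    (hvL : ε * ((Y.1 - Y.2) - (p.1 - p.2)) ≤ 0) :
    ∃ q ∈ A, ∃ r ∈ A, q.1 + q.2 = p.1 + p.2 ∧ r.1 - r.2 = p.1 - p.2 ∧
      ((0 ≤ ε * (q.1 - p.1) ∧ r.1 + r.2 ≤ p.1 + p.2) ∨
       (ε * (q.1 - p.1) ≤ 0 ∧ p.1 + p.2 ≤ r.1 + r.2)) := by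
  obtain ⟨γ, ⟨hγ0, hγL, hγd⟩, hγA⟩ := hA X hX Y hY
  have habs : |ε| = 1 := by rcases hε with rfl | rfl <;> norm_num
  have hne : ε ≠ 0 := by rcases hε with rfl | rfl <;> norm_num
  have key := cross_abs (dist X Y) (p.1 + p.2) (ε * (p.1 - p.2)) dist_nonneg
    (fun t => (γ t).1 + (γ t).2) (fun t => ε * ((γ t).1 - (γ t).2)) ?_ ?_ ?_ ?_ ?_
  · obtain ⟨t₁, ht₁, t₂, ht₂, h1, h2, h3⟩ := key
    refine ⟨γ t₁, hγA t₁ ht₁, γ t₂, hγA t₂ ht₂, h1, ?_, ?_⟩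
    · exact mul_left_cancel₀ hne h2
    · have hq' : ε * ((γ t₁).1 + (γ t₁).2) = ε * (p.1 + p.2) := by rw [h1]
      have hr : (γ t₂).1 - (γ t₂).2 = p.1 - p.2 := mul_left_cancel₀ hne h2
      rcases h3 with ⟨h3a, h3b⟩ | ⟨h3a, h3b⟩
      · left; exact ⟨by nlinarith [hq'], h3b⟩
      · right; exact ⟨by nlinarith [hq'], h3b⟩
  · intro s hs t ht
    have hd := hγd s hs t ht
    rw [Prod.dist_eq, Real.dist_eq, Real.dist_eq] at hd
    have h2 : ε * ((γ s).1 - (γ s).2) - ε * ((γ t).1 - (γ t).2)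
        = ε * (((γ s).1 - (γ t).1) - ((γ s).2 - (γ t).2)) := by ring
    have h1 : (γ s).1 + (γ s).2 - ((γ t).1 + (γ t).2)
        = ((γ s).1 - (γ t).1) + ((γ s).2 - (γ t).2) := by ring
    rw [h2, abs_mul, habs, one_mul, h1,
      abs_aux ((γ s).1 - (γ t).1) ((γ s).2 - (γ t).2), hd]
  · rw [hγ0]; exact hu0
  · rw [hγL]; exact huL
  · rw [hγ0]; nlinarith [hv0]
  · rw [hγL]; nlinarith [hvL]

lemma pair_anti (A : Set (ℝ × ℝ)) (hA : GeodConvex A) (p q r : ℝ × ℝ)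
    (hq : q ∈ A) (hr : r ∈ A) (hqs : q.1 + q.2 = p.1 + p.2)
    (hrs : r.1 + r.2 = p.1 + p.2) (hq1 : p.1 ≤ q.1) (hr1 : r.1 ≤ p.1) : p ∈ A := by
  obtain ⟨γ, ⟨hγ0, hγL, hγd⟩, hγA⟩ := hA q hq r hr
  have hL : dist q r = q.1 - r.1 := by
    rw [Prod.dist_eq, Real.dist_eq, Real.dist_eq]
    have h2 : q.2 - r.2 = r.1 - q.1 := by linarith
    rw [h2, abs_sub_comm r.1 q.1]
    rw [abs_of_nonneg (by linarith : (0:ℝ) ≤ q.1 - r.1)]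
    simp
  set t₀ := q.1 - p.1 with ht₀def
  have ht₀ : t₀ ∈ Set.Icc (0:ℝ) (dist q r) := ⟨by linarith, by rw [hL]; linarith⟩
  have h0m : (0:ℝ) ∈ Set.Icc (0:ℝ) (dist q r) := ⟨le_rfl, dist_nonneg⟩
  have hLm : dist q r ∈ Set.Icc (0:ℝ) (dist q r) := ⟨dist_nonneg, le_rfl⟩
  have d1 := hγd 0 h0m t₀ ht₀
  have d2 := hγd t₀ ht₀ (dist q r) hLm
  rw [hγ0] at d1; rw [hγL] at d2
  have e1 : dist q (γ t₀) = t₀ := by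
    rw [d1, abs_of_nonpos (show (0:ℝ) - t₀ ≤ 0 by linarith)]; ring
  have e2 : dist (γ t₀) r = dist q r - t₀ := by
    rw [d2, abs_of_nonpos (show t₀ - dist q r ≤ 0 by rw [hL]; linarith)]; ring
  have c1 : |q.1 - (γ t₀).1| ≤ t₀ := by
    have h := le_max_left (dist q.1 (γ t₀).1) (dist q.2 (γ t₀).2)
    rw [← Prod.dist_eq, e1] at h
    rw [← Real.dist_eq]; exact h
  have c2 : |q.2 - (γ t₀).2| ≤ t₀ := by
    have h := le_max_right (dist q.1 (γ t₀).1) (dist q.2 (γ t₀).2)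
    rw [← Prod.dist_eq, e1] at h
    rw [← Real.dist_eq]; exact h
  have c3 : |(γ t₀).1 - r.1| ≤ p.1 - r.1 := by
    have := le_max_left (dist (γ t₀).1 r.1) (dist (γ t₀).2 r.2)
    rw [← Prod.dist_eq, e2, hL] at this
    rw [← Real.dist_eq]; calc dist (γ t₀).1 r.1 ≤ _ := this
      _ = p.1 - r.1 := by rw [ht₀def]; ring
  have c4 : |(γ t₀).2 - r.2| ≤ p.1 - r.1 := by
    have := le_max_right (dist (γ t₀).1 r.1) (dist (γ t₀).2 r.2)
    rw [← Prod.dist_eq, e2, hL] at this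
    rw [← Real.dist_eq]; calc dist (γ t₀).2 r.2 ≤ _ := this
      _ = p.1 - r.1 := by rw [ht₀def]; ring
  obtain ⟨c1a, c1b⟩ := abs_le.mp c1
  obtain ⟨c2a, c2b⟩ := abs_le.mp c2
  obtain ⟨c3a, c3b⟩ := abs_le.mp c3
  obtain ⟨c4a, c4b⟩ := abs_le.mp c4
  have hx : (γ t₀).1 = p.1 := by linarith
  have hy : (γ t₀).2 = p.2 := by linarith
  have : γ t₀ = p := Prod.ext hx hy
  rw [← this]
  exact hγA t₀ ht₀

lemma pair_diag (A : Set (ℝ × ℝ)) (hA : GeodConvex A) (p q r : ℝ × ℝ)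
    (hq : q ∈ A) (hr : r ∈ A) (hqs : q.1 - q.2 = p.1 - p.2)
    (hrs : r.1 - r.2 = p.1 - p.2) (hq1 : p.1 ≤ q.1) (hr1 : r.1 ≤ p.1) : p ∈ A := by
  obtain ⟨γ, ⟨hγ0, hγL, hγd⟩, hγA⟩ := hA q hq r hr
  have hL : dist q r = q.1 - r.1 := by
    rw [Prod.dist_eq, Real.dist_eq, Real.dist_eq]
    have h2 : q.2 - r.2 = q.1 - r.1 := by linarith
    rw [h2, abs_of_nonneg (by linarith : (0:ℝ) ≤ q.1 - r.1)]
    simp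
  set t₀ := q.1 - p.1 with ht₀def
  have ht₀ : t₀ ∈ Set.Icc (0:ℝ) (dist q r) := ⟨by linarith, by rw [hL]; linarith⟩
  have h0m : (0:ℝ) ∈ Set.Icc (0:ℝ) (dist q r) := ⟨le_rfl, dist_nonneg⟩
  have hLm : dist q r ∈ Set.Icc (0:ℝ) (dist q r) := ⟨dist_nonneg, le_rfl⟩
  have d1 := hγd 0 h0m t₀ ht₀
  have d2 := hγd t₀ ht₀ (dist q r) hLm
  rw [hγ0] at d1; rw [hγL] at d2
  have e1 : dist q (γ t₀) = t₀ := by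
    rw [d1, abs_of_nonpos (show (0:ℝ) - t₀ ≤ 0 by linarith)]; ring
  have e2 : dist (γ t₀) r = dist q r - t₀ := by
    rw [d2, abs_of_nonpos (show t₀ - dist q r ≤ 0 by rw [hL]; linarith)]; ring
  have c1 : |q.1 - (γ t₀).1| ≤ t₀ := by
    have h := le_max_left (dist q.1 (γ t₀).1) (dist q.2 (γ t₀).2)
    rw [← Prod.dist_eq, e1] at h
    rw [← Real.dist_eq]; exact h
  have c2 : |q.2 - (γ t₀).2| ≤ t₀ := by
    have h := le_max_right (dist q.1 (γ t₀).1) (dist q.2 (γ t₀).2)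
    rw [← Prod.dist_eq, e1] at h
    rw [← Real.dist_eq]; exact h
  have c3 : |(γ t₀).1 - r.1| ≤ p.1 - r.1 := by
    have := le_max_left (dist (γ t₀).1 r.1) (dist (γ t₀).2 r.2)
    rw [← Prod.dist_eq, e2, hL] at this
    rw [← Real.dist_eq]; calc dist (γ t₀).1 r.1 ≤ _ := this
      _ = p.1 - r.1 := by rw [ht₀def]; ring
  have c4 : |(γ t₀).2 - r.2| ≤ p.1 - r.1 := by
    have := le_max_right (dist (γ t₀).1 r.1) (dist (γ t₀).2 r.2)
    rw [← Prod.dist_eq, e2, hL] at this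
    rw [← Real.dist_eq]; calc dist (γ t₀).2 r.2 ≤ _ := this
      _ = p.1 - r.1 := by rw [ht₀def]; ring
  obtain ⟨c1a, c1b⟩ := abs_le.mp c1
  obtain ⟨c2a, c2b⟩ := abs_le.mp c2
  obtain ⟨c3a, c3b⟩ := abs_le.mp c3
  obtain ⟨c4a, c4b⟩ := abs_le.mp c4
  have hx : (γ t₀).1 = p.1 := by linarith
  have hy : (γ t₀).2 = p.2 := by linarith
  have : γ t₀ = p := Prod.ext hx hy
  rw [← this]
  exact hγA t₀ ht₀

/-- If `A ⊆ ℝ²_∞` is geodesically convex and each of the four sectors of a point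
`p` contains a point of `A`, then `p ∈ A`. -/
theorem mem_of_all_sectors_meet (A : Set (ℝ × ℝ)) (hA : GeodConvex A) (p : ℝ × ℝ)
    (h1p : (sector1 1 p ∩ A).Nonempty) (h1m : (sector1 (-1) p ∩ A).Nonempty)
    (h2p : (sector2 1 p ∩ A).Nonempty) (h2m : (sector2 (-1) p ∩ A).Nonempty) :
    p ∈ A := by
  obtain ⟨a, haS, haA⟩ := h1p
  obtain ⟨b, hbS, hbA⟩ := h1m
  obtain ⟨c, hcS, hcA⟩ := h2p
  obtain ⟨d, hdS, hdA⟩ := h2m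
  simp only [sector1, sector2, Set.mem_setOf_eq] at haS hbS hcS hdS
  rw [Prod.dist_eq, Real.dist_eq, Real.dist_eq] at haS hbS hcS hdS
  -- coordinate bounds from sector membership
  have ha2 : |p.2 - a.2| ≤ a.1 - p.1 := by
    have := le_max_right |p.1 - a.1| |p.2 - a.2|; rw [haS] at this; linarith
  have hb2 : |p.2 - b.2| ≤ p.1 - b.1 := by
    have := le_max_right |p.1 - b.1| |p.2 - b.2|; rw [hbS] at this; linarith
  have hc1 : |p.1 - c.1| ≤ c.2 - p.2 := by
    have := le_max_left |p.1 - c.1| |p.2 - c.2|; rw [hcS] at this; linarith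
  have hd1 : |p.1 - d.1| ≤ p.2 - d.2 := by
    have := le_max_left |p.1 - d.1| |p.2 - d.2|; rw [hdS] at this; linarith
  obtain ⟨ha2a, ha2b⟩ := abs_le.mp ha2
  obtain ⟨hb2a, hb2b⟩ := abs_le.mp hb2
  obtain ⟨hc1a, hc1b⟩ := abs_le.mp hc1
  obtain ⟨hd1a, hd1b⟩ := abs_le.mp hd1
  -- points from the a–b geodesic (ε = 1)
  obtain ⟨q, hqA, r, hrA, hqs, hrs, hD1⟩ :=
    geo_points A hA p 1 (Or.inl rfl) a haA b hbA
      (by linarith) (by linarith) (by linarith) (by linarith)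
  -- points from the c–d geodesic (ε = -1)
  obtain ⟨q', hq'A, r', hr'A, hq's, hr's, hD2⟩ :=
    geo_points A hA p (-1) (Or.inr rfl) c hcA d hdA
      (by linarith) (by linarith) (by linarith) (by linarith)
  rcases hD1 with ⟨h1, h2⟩ | ⟨h1, h2⟩ <;> rcases hD2 with ⟨g1, g2⟩ | ⟨g1, g2⟩
  · exact pair_anti A hA p q q' hqA hq'A hqs hq's (by linarith) (by linarith)
  · exact pair_diag A hA p r' r hr'A hrA hr's hrs (by linarith) (by linarith)
  · exact pair_diag A hA p r r' hrA hr'A hrs hr's (by linarith) (by linarith)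
  · exact pair_anti A hA p q' q hq'A hqA hq's hqs (by linarith) (by linarith)
end

section
/- Let A be a connected subset of ℝⁿ_∞ and p ∈ ℝⁿ. If for some index i the two opposite sectors S_i^+(p) and S_i^−(p) of the point p both intersect A, but no other sector of p intersects A, then p ∈ A. -/
/-- The sector `S_i^ε(p)` in `ℝⁿ_∞`: points `q` with `d∞(p,q) = ε(q_i − p_i)`. -/
def sector {n : ℕ} (p : Fin n → ℝ) (i : Fin n) (ε : ℝ) : Set (Fin n → ℝ) :=
  {q | dist p q = ε * (q i - p i)}

/-! The `i`-th coordinate of the connected set `A` takes values on both sides of `p i`, so by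
the intermediate value theorem some `c ∈ A` has `c i = p i`. Every point lies in some sector of `p`;
for `c` this can only be `S_i^±(p)`, and there `c i = p i` forces `d∞(p, c) = 0`. -/

theorem exists_dist_eq_abs_sub {ι : Type*} [Fintype ι] [Nonempty ι] (p q : ι → ℝ) :
    ∃ j, dist p q = |q j - p j| := by
  obtain ⟨j, -, hj⟩ := Finset.univ.exists_mem_eq_sup Finset.univ_nonempty
    fun b => nndist (p b) (q b)
  exact ⟨j, by rw [dist_pi_def, hj, coe_nndist, Real.dist_eq, abs_sub_comm]⟩

theorem exists_mem_sector {n : ℕ} [Nonempty (Fin n)] (p q : Fin n → ℝ) :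
    ∃ j, q ∈ sector p j 1 ∨ q ∈ sector p j (-1) := by
  obtain ⟨j, hj⟩ := exists_dist_eq_abs_sub p q
  refine ⟨j, ?_⟩
  simp only [sector, Set.mem_ofPred_eq, hj, one_mul, neg_one_mul]
  rcases le_total 0 (q j - p j) with h | h
  · exact .inl (abs_of_nonneg h)
  · exact .inr (abs_of_nonpos h)

theorem apply_le_of_mem_sector_one {n : ℕ} {p q : Fin n → ℝ} {i : Fin n}
    (hq : q ∈ sector p i 1) : p i ≤ q i := by
  have : 0 ≤ 1 * (q i - p i) := hq ▸ dist_nonneg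
  linarith

theorem apply_le_of_mem_sector_neg_one {n : ℕ} {p q : Fin n → ℝ} {i : Fin n}
    (hq : q ∈ sector p i (-1)) : q i ≤ p i := by
  have : 0 ≤ -1 * (q i - p i) := hq ▸ dist_nonneg
  linarith

theorem eq_of_mem_sector_of_apply_eq {n : ℕ} {p q : Fin n → ℝ} {i : Fin n} {ε : ℝ}
    (hq : q ∈ sector p i ε) (hqi : q i = p i) : q = p := by
  rw [sector, Set.mem_ofPred_eq, hqi, sub_self, mul_zero, dist_eq_zero] at hq
  exact hq.symm

/-- Let `A ⊆ ℝⁿ_∞` be connected and `p ∈ ℝⁿ`. If the two opposite sectors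
`S_i^+(p)` and `S_i^−(p)` both meet `A` but no other sector of `p` meets `A`,
then `p ∈ A`. -/
theorem mem_of_opposite_sectors_meet {n : ℕ} (A : Set (Fin n → ℝ)) (p : Fin n → ℝ)
    (i : Fin n) (hA : IsConnected A)
    (hplus : (sector p i 1 ∩ A).Nonempty) (hminus : (sector p i (-1) ∩ A).Nonempty)
    (hother : ∀ j : Fin n, j ≠ i → ∀ ε : ℝ, ε = 1 ∨ ε = -1 → sector p j ε ∩ A = ∅) :
    p ∈ A := by
  obtain ⟨a, ha, haA⟩ := hplus
  obtain ⟨b, hb, hbA⟩ := hminus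
  obtain ⟨c, hcA, hci⟩ : p i ∈ (· i) '' A :=
    hA.isPreconnected.intermediate_value hbA haA (continuous_apply i).continuousOn
      ⟨apply_le_of_mem_sector_neg_one hb, apply_le_of_mem_sector_one ha⟩
  have : Nonempty (Fin n) := ⟨i⟩
  obtain ⟨j, hc⟩ := exists_mem_sector p c
  obtain rfl : j = i := by
    by_contra hji
    rcases hc with hc | hc
    · exact (hother j hji 1 (.inl rfl)).subset ⟨hc, hcA⟩
    · exact (hother j hji (-1) (.inr rfl)).subset ⟨hc, hcA⟩
  rcases hc with hc | hc <;> exact eq_of_mem_sector_of_apply_eq hc hci ▸ hcA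
end

section
/- Let A be a nonempty closed and geodesically convex subset of the l∞ plane ℝ²_∞, and let p ∈ ℝ²_∞. Then there exists a point q ∈ A such that d∞(a, q) ≤ d∞(a, p) for every a ∈ A; equivalently, the one-point extension A ∪ {p} admits a nonexpansive retraction onto A. -/
/-!
In the coordinates `x₁ + x₂`, `x₁ - x₂` the `ℓ∞` metric becomes half the `ℓ¹` metric, in which a
point lies metrically between two others iff it lies between them in each coordinate.

For a finite `S ⊆ A`, minimize `Φ x = max_{a ∈ S} (d(a, x) - d(a, p))` over `A`, at `y` say. If
`Φ y > 0`, any two points `a, b` of `S` attaining the maximum satisfy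
`d(a, b) ≤ d(a, p) + d(b, p) < d(a, y) + d(b, y)`, so no two of them lie in opposite closed
quadrants around `y`. Geodesic convexity then gives `w ∈ A` lying, coordinatewise, on the side of
every such `a` (where these straddle a coordinate line through `y`, `w` is where a geodesic between
two of them crosses that line), and a short step from `y` towards `w` lowers `Φ`. Compactness of
`A ∩ closedBall` passes from finite `S` to all of `A`.
-/

open Set Filter Topology

theorem abs_sub_eq_abs_add_abs_of_mul_nonpos {a b : ℝ} (h : a * b ≤ 0) :
    |a - b| = |a| + |b| := by
  rw [sub_eq_add_neg, (abs_add_eq_add_abs_iff _ _).mpr, abs_neg]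
  rcases mul_nonpos_iff.mp h with ⟨ha, hb⟩ | ⟨ha, hb⟩
  · exact .inl ⟨ha, neg_nonneg.mpr hb⟩
  · exact .inr ⟨ha, neg_nonpos.mpr hb⟩

theorem abs_sub_eq_abs_sub_abs_of_mul_nonneg {a b : ℝ} (h : 0 ≤ a * b) (hba : |b| ≤ |a|) :
    |a - b| = |a| - |b| := by
  rcases mul_nonneg_iff.mp h with ⟨ha, hb⟩ | ⟨ha, hb⟩
  · rw [abs_of_nonneg ha, abs_of_nonneg hb] at hba ⊢
    rw [abs_of_nonneg (by linarith)]
  · rw [abs_of_nonpos ha, abs_of_nonpos hb] at hba ⊢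
    rw [abs_of_nonpos (by linarith)]
    ring

theorem mem_uIcc_of_mul_sub_nonpos {a b c : ℝ} (h : (a - c) * (b - c) ≤ 0) : c ∈ uIcc a b := by
  rw [mem_uIcc]
  rcases mul_nonpos_iff.mp h with ⟨ha, hb⟩ | ⟨ha, hb⟩
  · exact .inr ⟨by linarith, by linarith⟩
  · exact .inl ⟨by linarith, by linarith⟩

theorem mem_uIcc_of_abs_sub_add_abs_sub_eq {a b c : ℝ} (h : |a - b| + |b - c| = |a - c|) :
    b ∈ uIcc a c := by
  rw [← segment_eq_uIcc, mem_segment_iff_wbtw, ← dist_add_dist_eq_iff]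
  simpa only [Real.dist_eq] using h

theorem mul_pos_of_mul_nonpos_of_mul_pos {x₁ x₂ x₃ y₁ y₂ y₃ : ℝ} (hx : x₁ * x₂ ≤ 0)
    (hy : 0 < y₁ * y₂) (h₁ : 0 < x₁ * x₃ ∨ 0 < y₁ * y₃) (h₂ : 0 < x₂ * x₃ ∨ 0 < y₂ * y₃) :
    0 < y₁ * y₃ := by
  rcases h₁ with h₁ | h₁
  · rcases h₂ with h₂ | h₂
    · nlinarith [mul_pos h₁ h₂, sq_nonneg x₃]
    · nlinarith [mul_pos hy h₂, sq_nonneg y₂]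
  · exact h₁

theorem sub_mul_pos_of_mem_uIcc {a b c x y : ℝ} (ha : 0 < (a - y) * c) (hb : 0 < (b - y) * c)
    (hx : x ∈ uIcc a b) : 0 < (x - y) * c := by
  rcases mem_uIcc.mp hx with ⟨h₁, h₂⟩ | ⟨h₁, h₂⟩ <;>
    rcases lt_or_gt_of_ne (right_ne_zero_of_mul ha.ne') with hc | hc <;> nlinarith

theorem sub_mul_nonneg_of_mem_uIcc {a w x y : ℝ} (hx : x ∈ uIcc y w) (h : 0 < (a - y) * (w - y)) :
    0 ≤ (a - y) * (x - y) := by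
  rcases mem_uIcc.mp hx with ⟨h₁, h₂⟩ | ⟨h₁, h₂⟩ <;>
    rcases pos_and_pos_or_neg_and_neg_of_mul_pos h with ⟨ha, hw⟩ | ⟨ha, hw⟩ <;> nlinarith

theorem sub_mul_nonneg_and_abs_le_of_mem_uIcc {a s w x y : ℝ} (hx : x ∈ uIcc y w)
    (hs : |x - y| ≤ s) (h : w = y ∨ (0 < (a - y) * (w - y) ∧ s ≤ |a - y|)) :
    0 ≤ (a - y) * (x - y) ∧ |x - y| ≤ |a - y| := by
  rcases h with h | ⟨h, hsa⟩
  · rw [h, uIcc_self, mem_singleton_iff] at hx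
    simp [hx]
  · exact ⟨sub_mul_nonneg_of_mem_uIcc hx h, hs.trans hsa⟩

section Geodesic

variable {X : Type*} [MetricSpace X] {y w : X} {γ : ℝ → X}

theorem IsGeodesic.continuousOn (hγ : IsGeodesic y w γ) :
    ContinuousOn γ (Icc 0 (dist y w)) :=
  (LipschitzOnWith.of_dist_le_mul (K := 1) fun s hs t ht => by
    rw [hγ.2.2 s hs t ht, NNReal.coe_one, one_mul, Real.dist_eq]).continuousOn

theorem IsGeodesic.dist_left (hγ : IsGeodesic y w γ) {t : ℝ} (ht : t ∈ Icc 0 (dist y w)) :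
    dist y (γ t) = t := by
  rw [← hγ.1, hγ.2.2 0 ⟨le_rfl, dist_nonneg⟩ t ht, zero_sub, abs_neg, abs_of_nonneg ht.1]

theorem IsGeodesic.dist_add_dist_eq (hγ : IsGeodesic y w γ) {t : ℝ}
    (ht : t ∈ Icc 0 (dist y w)) : dist y (γ t) + dist (γ t) w = dist y w := by
  have hend := hγ.2.2 t ht (dist y w) ⟨dist_nonneg, le_rfl⟩
  rw [hγ.2.1, abs_of_nonpos (sub_nonpos.mpr ht.2)] at hend
  rw [hγ.dist_left ht, hend]
  ring

end Geodesic

section L1Coordinates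

variable {X : Type*} [MetricSpace X] {f g : X → ℝ}

theorem lipschitzWith_two_of_two_mul_dist_eq
    (hfg : ∀ x y, 2 * dist x y = |f x - f y| + |g x - g y|) : LipschitzWith 2 f :=
  LipschitzWith.of_dist_le_mul fun x y => by
    have := hfg x y
    have := abs_nonneg (g x - g y)
    rw [Real.dist_eq]
    push_cast
    linarith

theorem mem_uIcc_of_dist_add_dist_eq (hfg : ∀ x y, 2 * dist x y = |f x - f y| + |g x - g y|)
    {x y z : X} (h : dist x y + dist y z = dist x z) :
    f y ∈ uIcc (f x) (f z) ∧ g y ∈ uIcc (g x) (g z) := by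
  have := abs_sub_le (f x) (f y) (f z)
  have := abs_sub_le (g x) (g y) (g z)
  have := hfg x y
  have := hfg y z
  have := hfg x z
  exact ⟨mem_uIcc_of_abs_sub_add_abs_sub_eq (by linarith),
    mem_uIcc_of_abs_sub_add_abs_sub_eq (by linarith)⟩

theorem dist_add_dist_eq_of_mul_nonneg (hfg : ∀ x y, 2 * dist x y = |f x - f y| + |g x - g y|)
    {a x y : X} (hf : 0 ≤ (f a - f y) * (f x - f y)) (hf' : |f x - f y| ≤ |f a - f y|)
    (hg : 0 ≤ (g a - g y) * (g x - g y)) (hg' : |g x - g y| ≤ |g a - g y|) :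
    dist a x + dist x y = dist a y := by
  have ef := abs_sub_eq_abs_sub_abs_of_mul_nonneg hf hf'
  have eg := abs_sub_eq_abs_sub_abs_of_mul_nonneg hg hg'
  rw [sub_sub_sub_cancel_right] at ef eg
  have := hfg a x
  have := hfg x y
  have := hfg a y
  linarith

theorem pos_mul_or_pos_mul_of_dist_lt (hfg : ∀ x y, 2 * dist x y = |f x - f y| + |g x - g y|)
    {a b y : X} (h : dist a b < dist a y + dist b y) :
    0 < (f a - f y) * (f b - f y) ∨ 0 < (g a - g y) * (g b - g y) := by
  by_contra! hle
  have ef := abs_sub_eq_abs_add_abs_of_mul_nonpos hle.1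
  have eg := abs_sub_eq_abs_add_abs_of_mul_nonpos hle.2
  rw [sub_sub_sub_cancel_right] at ef eg
  have := hfg a b
  have := hfg a y
  have := hfg b y
  linarith

variable {A : Set X}

theorem GeodConvex.exists_mem_eq_of_mem_uIcc
    (hfg : ∀ x y, 2 * dist x y = |f x - f y| + |g x - g y|) (hA : GeodConvex A)
    {a b : X} (ha : a ∈ A) (hb : b ∈ A) {c : ℝ} (hc : c ∈ uIcc (f a) (f b)) :
    ∃ w ∈ A, f w = c ∧ g w ∈ uIcc (g a) (g b) := by
  obtain ⟨γ, hγ, hγA⟩ := hA a ha b hb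
  have hIcc : uIcc 0 (dist a b) = Icc 0 (dist a b) := uIcc_of_le dist_nonneg
  have hcont : ContinuousOn (f ∘ γ) (uIcc 0 (dist a b)) :=
    (lipschitzWith_two_of_two_mul_dist_eq hfg).continuous.comp_continuousOn
      (hIcc ▸ hγ.continuousOn)
  obtain ⟨t, ht, rfl⟩ := intermediate_value_uIcc hcont (by simpa [hγ.1, hγ.2.1] using hc)
  rw [hIcc] at ht
  exact ⟨γ t, hγA t ht, rfl, (mem_uIcc_of_dist_add_dist_eq hfg (hγ.dist_add_dist_eq ht)).2⟩

theorem GeodConvex.exists_mem_eq_of_mul_nonpos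
    (hfg : ∀ x y, 2 * dist x y = |f x - f y| + |g x - g y|) (hA : GeodConvex A)
    {T : Finset X} (hTA : ↑T ⊆ A) {y : X}
    (hT : ∀ a ∈ T, ∀ b ∈ T, 0 < (f a - f y) * (f b - f y) ∨ 0 < (g a - g y) * (g b - g y))
    {a b : X} (ha : a ∈ T) (hb : b ∈ T) (hab : (f a - f y) * (f b - f y) ≤ 0) :
    ∃ w ∈ A, f w = f y ∧ ∀ c ∈ T, 0 < (g c - g y) * (g w - g y) := by
  have hgab : 0 < (g a - g y) * (g b - g y) := (hT a ha b hb).resolve_left hab.not_gt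
  obtain ⟨w, hwA, hfw, hgw⟩ :=
    hA.exists_mem_eq_of_mem_uIcc hfg (hTA ha) (hTA hb) (mem_uIcc_of_mul_sub_nonpos hab)
  refine ⟨w, hwA, hfw, fun c hc => ?_⟩
  have hac := mul_pos_of_mul_nonpos_of_mul_pos hab hgab (hT a ha c hc) (hT b hb c hc)
  have hbc := mul_pos_of_mul_nonpos_of_mul_pos (by rwa [mul_comm]) (by rwa [mul_comm])
    (hT b hb c hc) (hT a ha c hc)
  rw [mul_comm]
  exact sub_mul_pos_of_mem_uIcc hac hbc hgw

theorem GeodConvex.exists_descent_direction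
    (hfg : ∀ x y, 2 * dist x y = |f x - f y| + |g x - g y|) (hA : GeodConvex A)
    {T : Finset X} (hT : T.Nonempty) (hTA : ↑T ⊆ A) {y : X}
    (hpair : ∀ a ∈ T, ∀ b ∈ T, 0 < (f a - f y) * (f b - f y) ∨ 0 < (g a - g y) * (g b - g y)) :
    ∃ w ∈ A, w ≠ y ∧ ∀ a ∈ T, (f w = f y ∨ 0 < (f a - f y) * (f w - f y)) ∧
      (g w = g y ∨ 0 < (g a - g y) * (g w - g y)) := by
  by_cases hf : ∃ a ∈ T, ∃ b ∈ T, (f a - f y) * (f b - f y) ≤ 0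
  · obtain ⟨a, ha, b, hb, hab⟩ := hf
    obtain ⟨w, hwA, hfw, hgw⟩ := hA.exists_mem_eq_of_mul_nonpos hfg hTA hpair ha hb hab
    refine ⟨w, hwA, ?_, fun c hc => ⟨.inl hfw, .inr (hgw c hc)⟩⟩
    rintro rfl
    simpa using hgw a ha
  push Not at hf
  by_cases hg : ∃ a ∈ T, ∃ b ∈ T, (g a - g y) * (g b - g y) ≤ 0
  · obtain ⟨a, ha, b, hb, hab⟩ := hg
    obtain ⟨w, hwA, hgw, hfw⟩ := hA.exists_mem_eq_of_mul_nonpos (f := g) (g := f)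
      (fun x z => (hfg x z).trans (add_comm _ _)) hTA (fun a ha b hb => (hpair a ha b hb).symm)
      ha hb hab
    refine ⟨w, hwA, ?_, fun c hc => ⟨.inr (hfw c hc), .inl hgw⟩⟩
    rintro rfl
    simpa using hfw a ha
  push Not at hg
  obtain ⟨a, ha⟩ := hT
  refine ⟨a, hTA ha, ?_, fun c hc => ⟨.inr (hf c hc a ha), .inr (hg c hc a ha)⟩⟩
  rintro rfl
  simpa using hf a ha a ha

theorem GeodConvex.eventually_exists_dist_eq_sub_of_direction
    (hfg : ∀ x y, 2 * dist x y = |f x - f y| + |g x - g y|) (hA : GeodConvex A)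
    {y w : X} (hy : y ∈ A) (hw : w ∈ A) (hyw : y ≠ w) {T : Finset X}
    (hT : ∀ a ∈ T, (f w = f y ∨ 0 < (f a - f y) * (f w - f y)) ∧
      (g w = g y ∨ 0 < (g a - g y) * (g w - g y))) :
    ∀ᶠ t in 𝓝[>] 0, ∃ x ∈ A, dist y x = t ∧ ∀ a ∈ T, dist a x = dist a y - t := by
  obtain ⟨γ, hγ, hγA⟩ := hA y hy w hw
  have hsmall (h : X → ℝ) (a : X) (hdir : h w = h y ∨ 0 < (h a - h y) * (h w - h y)) :
      ∀ᶠ t in 𝓝[>] (0 : ℝ), h w = h y ∨ (0 < (h a - h y) * (h w - h y) ∧ 2 * t ≤ |h a - h y|) := by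
    rcases hdir with hdir | hdir
    · exact .of_forall fun _ => .inl hdir
    · have hpos : 0 < |h a - h y| / 2 := half_pos (abs_pos.mpr (left_ne_zero_of_mul hdir.ne'))
      filter_upwards [Ioo_mem_nhdsGT hpos] with t ht
      exact .inr ⟨hdir, by linarith [ht.2]⟩
  filter_upwards [Ioo_mem_nhdsGT (dist_pos.mpr hyw),
    (T.eventually_all).mpr fun a ha => (hsmall f a (hT a ha).1).and (hsmall g a (hT a ha).2)]
    with t ht hTt
  have ht' : t ∈ Icc 0 (dist y w) := Ioo_subset_Icc_self ht
  have hyx := hγ.dist_left ht'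
  have ⟨hfx, hgx⟩ := mem_uIcc_of_dist_add_dist_eq hfg (hγ.dist_add_dist_eq ht')
  have hxy := hfg (γ t) y
  rw [dist_comm, hyx] at hxy
  refine ⟨γ t, hγA t ht', hyx, fun a ha => ?_⟩
  have ⟨hf, hf'⟩ := sub_mul_nonneg_and_abs_le_of_mem_uIcc hfx
    (by linarith [abs_nonneg (g (γ t) - g y)]) (hTt a ha).1
  have ⟨hg, hg'⟩ := sub_mul_nonneg_and_abs_le_of_mem_uIcc hgx
    (by linarith [abs_nonneg (f (γ t) - f y)]) (hTt a ha).2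
  have := dist_add_dist_eq_of_mul_nonneg hfg hf hf' hg hg'
  rw [dist_comm (γ t) y, hyx] at this
  linarith

theorem GeodConvex.eventually_exists_dist_eq_sub
    (hfg : ∀ x y, 2 * dist x y = |f x - f y| + |g x - g y|) (hA : GeodConvex A)
    {y : X} (hy : y ∈ A) {T : Finset X} (hT : T.Nonempty) (hTA : ↑T ⊆ A)
    (hpair : ∀ a ∈ T, ∀ b ∈ T, dist a b < dist a y + dist b y) :
    ∀ᶠ t in 𝓝[>] 0, ∃ x ∈ A, dist y x = t ∧ ∀ a ∈ T, dist a x = dist a y - t := by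
  obtain ⟨w, hwA, hwy, hdir⟩ := hA.exists_descent_direction hfg hT hTA
    fun a ha b hb => pos_mul_or_pos_mul_of_dist_lt hfg (hpair a ha b hb)
  exact hA.eventually_exists_dist_eq_sub_of_direction hfg hy hwA hwy.symm hdir

end L1Coordinates

section Retraction

variable {X : Type*} [MetricSpace X] [ProperSpace X] {A : Set X}

theorem exists_isMinOn_finset_sup'_dist_sub (hA : IsClosed A) (p : X) {S : Finset X}
    (hS : S.Nonempty) (hSA : ↑S ⊆ A) :
    ∃ y ∈ A, IsMinOn (fun x => S.sup' hS fun a => dist a x - dist a p) A y := by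
  obtain ⟨a₁, ha₁⟩ := id hS
  refine (Continuous.finset_sup'_apply hS fun a _ =>
    (continuous_const.dist continuous_id).sub continuous_const).continuousOn.exists_isMinOn'
      hA (hSA ha₁) ?_
  filter_upwards [((tendsto_dist_right_cocompact_atTop a₁).eventually_ge_atTop
    ((S.sup' hS fun a => dist a a₁ - dist a p) + dist a₁ p)).filter_mono inf_le_left] with x hx
  change (S.sup' hS fun a => dist a a₁ - dist a p) ≤ S.sup' hS fun a => dist a x - dist a p
  linarith [Finset.le_sup' (fun a => dist a x - dist a p) ha₁, dist_comm a₁ x]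

theorem exists_forall_dist_le_of_eventually_descent (hA : IsClosed A)
    (hdesc : ∀ y ∈ A, ∀ T : Finset X, T.Nonempty → ↑T ⊆ A →
      (∀ a ∈ T, ∀ b ∈ T, dist a b < dist a y + dist b y) →
      ∀ᶠ t in 𝓝[>] 0, ∃ x ∈ A, dist y x = t ∧ ∀ a ∈ T, dist a x = dist a y - t)
    (p : X) {S : Finset X} (hS : S.Nonempty) (hSA : ↑S ⊆ A) :
    ∃ x ∈ A, ∀ a ∈ S, dist a x ≤ dist a p := by
  classical
  obtain ⟨y, hyA, hmin⟩ := exists_isMinOn_finset_sup'_dist_sub hA p hS hSA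
  set Φ : X → ℝ := fun x => S.sup' hS fun a => dist a x - dist a p
  have hle_Φ (x : X) {a : X} (ha : a ∈ S) : dist a x - dist a p ≤ Φ x :=
    Finset.le_sup' (fun a => dist a x - dist a p) ha
  by_cases hm : Φ y ≤ 0
  · exact ⟨y, hyA, fun a ha => by linarith [hle_Φ y ha]⟩
  exfalso
  set T := S.filter fun a => dist a y - dist a p = Φ y
  have hT : T.Nonempty := by
    obtain ⟨a, ha, hay⟩ := Finset.exists_mem_eq_sup' hS fun a => dist a y - dist a p
    exact ⟨a, Finset.mem_filter.mpr ⟨ha, hay.symm⟩⟩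
  have hTA : ↑T ⊆ A := (Finset.coe_subset.mpr (Finset.filter_subset _ _)).trans hSA
  have hpair : ∀ a ∈ T, ∀ b ∈ T, dist a b < dist a y + dist b y := by
    intro a ha b hb
    have := (Finset.mem_filter.mp ha).2
    have := (Finset.mem_filter.mp hb).2
    linarith [dist_triangle_right a b p]
  have hslack : ∀ a ∈ S, ∀ᶠ t in 𝓝[>] (0 : ℝ),
      dist a y - dist a p < Φ y → t < Φ y - (dist a y - dist a p) := fun a _ => by
    by_cases h : dist a y - dist a p < Φ y
    · filter_upwards [Ioo_mem_nhdsGT (sub_pos.mpr h)] with t ht using fun _ => ht.2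
    · exact .of_forall fun _ h' => absurd h' h
  obtain ⟨t, ht, ⟨x, hxA, hyx, hxT⟩, hxS⟩ := (eventually_mem_nhdsWithin.and
    ((hdesc y hyA T hT hTA hpair).and ((S.eventually_all).mpr hslack))).exists
  have hΦx : Φ x < Φ y := by
    refine (Finset.sup'_lt_iff _).mpr fun a ha => ?_
    by_cases haT : a ∈ T
    · have := (Finset.mem_filter.mp haT).2
      linarith [hxT a haT, mem_Ioi.mp ht]
    · have hlt : dist a y - dist a p < Φ y :=
        (hle_Φ y ha).lt_of_ne fun h => haT (Finset.mem_filter.mpr ⟨ha, h⟩)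
      linarith [hxS a ha hlt, dist_triangle a y x]
  exact (hmin hxA).not_gt hΦx

theorem exists_forall_dist_le_of_forall_finset (hA : IsClosed A) (hne : A.Nonempty) (p : X)
    (h : ∀ S : Finset X, S.Nonempty → ↑S ⊆ A → ∃ x ∈ A, ∀ a ∈ S, dist a x ≤ dist a p) :
    ∃ q ∈ A, ∀ a ∈ A, dist a q ≤ dist a p := by
  classical
  obtain ⟨a₀, ha₀⟩ := hne
  have hK : IsCompact (A ∩ Metric.closedBall a₀ (dist a₀ p)) :=
    (isCompact_closedBall _ _).inter_left hA
  obtain ⟨q, ⟨hqA, -⟩, hq⟩ := hK.inter_iInter_nonempty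
    (fun a : A => {x | dist (a : X) x ≤ dist (a : X) p})
    (fun _ => isClosed_le (continuous_const.dist continuous_id) continuous_const) fun u => by
      have hSA : ↑(insert a₀ (u.image Subtype.val)) ⊆ A := by
        intro x hx
        simp only [Finset.coe_insert, Finset.coe_image, mem_insert_iff, mem_image] at hx
        rcases hx with rfl | ⟨a, -, rfl⟩
        exacts [ha₀, a.2]
      obtain ⟨x, hxA, hx⟩ := h _ (Finset.insert_nonempty _ _) hSA
      refine ⟨x, ⟨hxA, ?_⟩, mem_iInter₂.mpr fun a ha =>
        hx a (Finset.mem_insert_of_mem (Finset.mem_image_of_mem _ ha))⟩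
      rw [Metric.mem_closedBall, dist_comm]
      exact hx a₀ (Finset.mem_insert_self _ _)
  exact ⟨q, hqA, fun a ha => mem_iInter.mp hq ⟨a, ha⟩⟩

end Retraction

theorem Prod.two_mul_dist_eq_abs_add_abs (x y : ℝ × ℝ) :
    2 * dist x y = |(x.1 + x.2) - (y.1 + y.2)| + |(x.1 - x.2) - (y.1 - y.2)| := by
  rw [Prod.dist_eq, Real.dist_eq, Real.dist_eq]
  rcases le_total |x.1 - y.1| |x.2 - y.2| with h | h <;>
    simp only [h, max_eq_left, max_eq_right] <;> grind [abs_le]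

/-- For any nonempty closed geodesically convex `A ⊆ ℝ²_∞` and any point
`p ∈ ℝ²_∞` there is `q ∈ A` with `d∞(a,q) ≤ d∞(a,p)` for all `a ∈ A`; i.e. the
one-point extension `A ∪ {p}` retracts nonexpansively onto `A`. -/
theorem one_point_extension_retracts (A : Set (ℝ × ℝ)) (hne : A.Nonempty)
    (hcl : IsClosed A) (hgc : GeodConvex A) (p : ℝ × ℝ) :
    ∃ q ∈ A, ∀ a ∈ A, dist a q ≤ dist a p :=
  exists_forall_dist_le_of_forall_finset hcl hne p fun _ hS hSA =>
    exists_forall_dist_le_of_eventually_descent hcl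
      (fun _ hy _ hT hTA hpair => hgc.eventually_exists_dist_eq_sub
        (f := fun x => x.1 + x.2) (g := fun x => x.1 - x.2) Prod.two_mul_dist_eq_abs_add_abs
        hy hT hTA hpair)
      p hS hSA
end

section
/- Let p, q ∈ ℝⁿ_∞ with q ∈ S_i^ε(p) for some index i and sign ε. Then the union of geodesic segments from p to q satisfies D_{pq} = S_i^ε(p) ∩ S_i^{−ε}(q), where D_{pq} = {u ∈ ℝⁿ : d∞(p,u) + d∞(u,q) = d∞(p,q)}. -/
/-- The union of geodesic segments from `p` to `q` in `ℝⁿ_∞`: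
`D_{pq} = {u : d∞(p,u) + d∞(u,q) = d∞(p,q)}`. -/
def geodSegUnion {n : ℕ} (p q : Fin n → ℝ) : Set (Fin n → ℝ) :=
  {u | dist p u + dist u q = dist p q}

theorem mul_sub_le_dist {ι : Type*} [Fintype ι] (a b : ι → ℝ) (i : ι) {ε : ℝ} (hε : |ε| ≤ 1) :
    ε * (b i - a i) ≤ dist a b :=
  calc ε * (b i - a i) ≤ |ε * (b i - a i)| := le_abs_self _
    _ = |ε| * dist (a i) (b i) := by rw [abs_mul, Real.dist_eq, abs_sub_comm]
    _ ≤ 1 * dist a b := mul_le_mul hε (dist_le_pi_dist a b i) dist_nonneg zero_le_one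
    _ = dist a b := one_mul _

/-- If `q ∈ S_i^ε(p)` in `ℝⁿ_∞`, then `D_{pq} = S_i^ε(p) ∩ S_i^{−ε}(q)`. -/
theorem geodSegUnion_eq_sector_inter {n : ℕ} (p q : Fin n → ℝ) (i : Fin n) (ε : ℝ)
    (hε : ε = 1 ∨ ε = -1) (hq : q ∈ sector p i ε) :
    geodSegUnion p q = sector p i ε ∩ sector q i (-ε) := by
  have habs : |ε| ≤ 1 := by rcases hε with rfl | rfl <;> simp
  ext u
  -- The two sector conditions are the equality cases of two lower bounds whose sum is `d(p,q)`.
  have hpq : dist p q = ε * (u i - p i) + -ε * (u i - q i) := by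
    rw [show dist p q = ε * (q i - p i) from hq]; ring
  simp only [geodSegUnion, sector, Set.mem_ofPred_eq, Set.mem_inter_iff, dist_comm u q, hpq]
  rw [eq_comm, add_eq_add_iff_eq_and_eq (mul_sub_le_dist p u i habs)
    (mul_sub_le_dist q u i (by rwa [abs_neg])), eq_comm, eq_comm (a := -ε * _)]
end
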